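/- arXiv:2602.14936 — 6 statements merged into one kernel-verified Lean document; each statement's English description precedes it below -/
import Mathlib

section
/- Let D be a multidigraph and e an edge of D. Then the link of e in the directed linear forest complex Dlf(D) equals the directed linear forest complex of the multidigraph D↓e obtained by deleting every edge with source s(e), every edge with target t(e), and every edge whose unordered endpoint pair is {s(e),t(e)}, and then identifying s(e) with t(e). -/
namespace ArXiv

/-! ## Multidigraphs and their directed-forest complexes.
A multidigraph on vertex type `V` with edge type `E` is given by source and
target maps `s t : E → V`. -/

/-- `σ` induces a directed cycle (of some length `n ≥ 1`) in the multidigraph `(s, t)`: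
its edges can be arranged cyclically, with pairwise distinct sources, the target of each
edge being the source of the next one. -/
def IsDirCycle {V E : Type} (s t : E → V) (n : ℕ) (σ : Finset E) : Prop :=
  0 < n ∧ ∃ g : ZMod n → E, Function.Injective g ∧
    (∀ e, e ∈ σ ↔ ∃ i, g i = e) ∧
    Function.Injective (fun i => s (g i)) ∧
    (∀ i, t (g i) = s (g (i + 1)))

/-- No subset of `σ` induces a directed cycle. -/
def NoDirCycleIn {V E : Type} (s t : E → V) (σ : Finset E) : Prop :=
  ∀ (n : ℕ) (τ : Finset E), τ ⊆ σ → ¬ IsDirCycle s t n τ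

/-- `σ` induces a vertex-disjoint union of directed paths: all sources are distinct,
all targets are distinct, and there is no directed cycle inside `σ`. -/
def IsLinearForest {V E : Type} (s t : E → V) (σ : Finset E) : Prop :=
  (∀ e ∈ σ, ∀ f ∈ σ, e ≠ f → s e ≠ s f) ∧
  (∀ e ∈ σ, ∀ f ∈ σ, e ≠ f → t e ≠ t f) ∧
  NoDirCycleIn s t σ

/-- `σ` induces a directed forest: no two distinct edges share a target and there is
no directed cycle inside `σ`. -/
def IsDirForest {V E : Type} (s t : E → V) (σ : Finset E) : Prop :=
  (∀ e ∈ σ, ∀ f ∈ σ, e ≠ f → t e ≠ t f) ∧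
  NoDirCycleIn s t σ

/-- The directed linear forest complex `Dlf(D)`, as its set of faces. -/
def Dlf {V E : Type} (s t : E → V) : Set (Finset E) := {σ | IsLinearForest s t σ}

/-- The directed tree complex `DT(D)`, as its set of faces. -/
def DT {V E : Type} (s t : E → V) : Set (Finset E) := {σ | IsDirForest s t σ}

/-- The edges `e` and `f` have the same unordered pair of endpoints. -/
def SameEnds {V E : Type} (s t : E → V) (e f : E) : Prop :=
  (s e = s f ∧ t e = t f) ∨ (s e = t f ∧ t e = s f)

/-- Adjacency in the linear-forest conflict graph `G^lf_D`. -/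
def LFAdj {V E : Type} (s t : E → V) (e f : E) : Prop :=
  e ≠ f ∧ (s e = s f ∨ t e = t f ∨ SameEnds s t e f)

/-- Adjacency in the tree conflict graph `G^t_D`. -/
def TAdj {V E : Type} (s t : E → V) (e f : E) : Prop :=
  e ≠ f ∧ (t e = t f ∨ SameEnds s t e f)

/-- `σ` is an independent set for the adjacency relation `A`. -/
def IndepIn {E : Type} (A : E → E → Prop) (σ : Finset E) : Prop :=
  ∀ e ∈ σ, ∀ f ∈ σ, ¬ A e f

/-- `D` has no directed cycle of length at least 3 (directed 2-cycles are allowed). -/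
def TwoAcyclic {V E : Type} (s t : E → V) : Prop :=
  ∀ (n : ℕ) (σ : Finset E), 3 ≤ n → ¬ IsDirCycle s t n σ

/-- `D` has no directed cycles at all. -/
def Acyclic {V E : Type} (s t : E → V) : Prop :=
  ∀ (n : ℕ) (σ : Finset E), ¬ IsDirCycle s t n σ

/-- Adjacency in the underlying (simple, undirected) graph of `D`. -/
def UAdj {V E : Type} (s t : E → V) (u v : V) : Prop :=
  u ≠ v ∧ ∃ e, (s e = u ∧ t e = v) ∨ (s e = v ∧ t e = u)

/-- The underlying graph of `D` is a forest: it contains no cycle of length `≥ 3`. -/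
def UnderlyingForest {V E : Type} (s t : E → V) : Prop :=
  ¬ ∃ m : ℕ, 3 ≤ m ∧ ∃ h : ZMod m → V, Function.Injective h ∧
    ∀ i, UAdj s t (h i) (h (i + 1))

/-- An alternating closed trail: a cyclic sequence of distinct edges in which any two
cyclically consecutive edges share a source or share a target. -/
def HasAltClosedTrail {V E : Type} (s t : E → V) : Prop :=
  ∃ k : ℕ, 2 ≤ k ∧ ∃ g : ZMod k → E, Function.Injective g ∧
    ∀ i, s (g i) = s (g (i + 1)) ∨ t (g i) = t (g (i + 1))

/-- `D` has no induced subgraph isomorphic to `L₂`, the double directed string on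
three vertices. -/
def IsL2Free {V E : Type} (s t : E → V) : Prop :=
  ¬ ∃ a b c : V, a ≠ b ∧ b ≠ c ∧ a ≠ c ∧
    ∃ e1 e2 e3 e4 : E,
      e1 ≠ e2 ∧ e1 ≠ e3 ∧ e1 ≠ e4 ∧ e2 ≠ e3 ∧ e2 ≠ e4 ∧ e3 ≠ e4 ∧
      s e1 = a ∧ t e1 = b ∧ s e2 = b ∧ t e2 = a ∧
      s e3 = b ∧ t e3 = c ∧ s e4 = c ∧ t e4 = b ∧
      ∀ f : E, s f ∈ ({a, b, c} : Set V) → t f ∈ ({a, b, c} : Set V) →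
        f ∈ ({e1, e2, e3, e4} : Set E)

/-- The relation `A` (a graph on `β`) has an induced cycle of length at least 4. -/
def HasInducedCycleGE4 {β : Type} (A : β → β → Prop) : Prop :=
  ∃ n : ℕ, 4 ≤ n ∧ ∃ g : ZMod n → β, Function.Injective g ∧
    ∀ i j : ZMod n, i ≠ j → (A (g i) (g j) ↔ j = i + 1 ∨ i = j + 1)

/-! ## Simplicial complexes (as sets of faces). -/

/-- `σ` is a facet (inclusion-maximal face) of `Δ`. -/
def IsFacetOf {α : Type} (Δ : Set (Finset α)) (σ : Finset α) : Prop :=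
  σ ∈ Δ ∧ ∀ τ ∈ Δ, σ ⊆ τ → σ = τ

/-- Deletion of the vertex `v` in `Δ`. -/
def delC {α : Type} (Δ : Set (Finset α)) (v : α) : Set (Finset α) :=
  {τ ∈ Δ | v ∉ τ}

/-- Link of the vertex `v` in `Δ`. -/
def linkC {α : Type} [DecidableEq α] (Δ : Set (Finset α)) (v : α) : Set (Finset α) :=
  {τ | τ ∈ Δ ∧ v ∉ τ ∧ insert v τ ∈ Δ}

/-- `v` is a shedding vertex: every facet of the deletion is a facet of `Δ`. -/
def SheddingVertex {α : Type} (Δ : Set (Finset α)) (v : α) : Prop :=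
  ∀ σ, IsFacetOf (delC Δ v) σ → IsFacetOf Δ σ

/-- Vertex decomposability. -/
inductive VertexDecomposable {α : Type} [DecidableEq α] : Set (Finset α) → Prop
  | void : VertexDecomposable (∅ : Set (Finset α))
  | simplex (σ : Finset α) : VertexDecomposable {τ | τ ⊆ σ}
  | shed (Δ : Set (Finset α)) (v : α) :
      VertexDecomposable (linkC Δ v) → VertexDecomposable (delC Δ v) →
      SheddingVertex Δ v → VertexDecomposable Δ

/-- Shellability (in the non-pure sense of Björner–Wachs). -/
def Shellable {α : Type} (Δ : Set (Finset α)) : Prop :=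
  ∃ (m : ℕ) (F : Fin m → Finset α), Function.Injective F ∧
    (∀ σ, IsFacetOf Δ σ ↔ ∃ i, F i = σ) ∧
    ∀ i : Fin m, 0 < (i : ℕ) → ∀ τ : Finset α, τ ⊆ F i → (∃ j, j < i ∧ τ ⊆ F j) →
      ∃ ρ : Finset α, ρ ⊆ F i ∧ (∃ j, j < i ∧ ρ ⊆ F j) ∧
        ρ.card + 1 = (F i).card ∧ τ ⊆ ρ

/-- The pure `d`-skeleton of `Δ`: the subcomplex generated by the `d`-dimensional faces. -/
def pureSkel {α : Type} (Δ : Set (Finset α)) (d : ℕ) : Set (Finset α) :=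
  {τ | ∃ σ ∈ Δ, σ.card = d + 1 ∧ τ ⊆ σ}

/-- Link of a face `σ` in `Δ`. -/
def linkFaceC {α : Type} [DecidableEq α] (Δ : Set (Finset α)) (σ : Finset α) :
    Set (Finset α) :=
  {τ | τ ∩ σ = ∅ ∧ τ ∪ σ ∈ Δ}

/-- Connectivity of a simplicial complex: any two vertices are joined by an edge path. -/
def ComplexConnected {α : Type} [DecidableEq α] (Δ : Set (Finset α)) : Prop :=
  ∀ u v : α, ({u} : Finset α) ∈ Δ → ({v} : Finset α) ∈ Δ →
    Relation.ReflTransGen (fun a b => ({a, b} : Finset α) ∈ Δ) u v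

/-! ## Simplicial homology via ordered chains, and (sequential) Cohen–Macaulayness. -/

/-- A chain (a function on ordered tuples) is supported on faces of `Δ`. -/
def validChain {α K : Type} [DecidableEq α] [Field K] {k : ℕ}
    (Δ : Set (Finset α)) (c : (Fin k → α) → K) : Prop :=
  ∀ g, c g ≠ 0 → (Finset.univ.image g) ∈ Δ

/-- The simplicial boundary operator on ordered chains. -/
def bdry {α K : Type} [Fintype α] [Field K] {k : ℕ}
    (c : (Fin (k + 2) → α) → K) : (Fin (k + 1) → α) → K :=
  fun g => ∑ j : Fin (k + 2), (-1 : K) ^ (j : ℕ) * ∑ v : α, c (Fin.insertNth j v g)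

/-- Vanishing of the `i`-th reduced simplicial homology of `Δ` with coefficients in `K`
(computed with ordered chains; degree `0` uses the augmentation). -/
def RHomZero (α K : Type) [Fintype α] [DecidableEq α] [Field K]
    (Δ : Set (Finset α)) : ℕ → Prop
  | 0 => ∀ c : (Fin 1 → α) → K, validChain Δ c → (∑ g : Fin 1 → α, c g) = 0 →
      ∃ b : (Fin 2 → α) → K, validChain Δ b ∧ bdry b = c
  | (i + 1) => ∀ c : (Fin (i + 2) → α) → K, validChain Δ c → bdry c = 0 →
      ∃ b : (Fin (i + 3) → α) → K, validChain Δ b ∧ bdry b = c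

/-- `Δ` is Cohen–Macaulay over `K`: for every face `σ`, the reduced homology of its
link vanishes in all degrees strictly below the dimension of the link. -/
def IsCM (α K : Type) [Fintype α] [DecidableEq α] [Field K]
    (Δ : Set (Finset α)) : Prop :=
  ∀ σ ∈ Δ, ∀ i : ℕ, (∃ τ ∈ linkFaceC Δ σ, i + 2 ≤ τ.card) →
    RHomZero α K (linkFaceC Δ σ) i

/-- `Δ` is sequentially Cohen–Macaulay over `K`: every pure skeleton is Cohen–Macaulay. -/
def IsSCM (α K : Type) [Fintype α] [DecidableEq α] [Field K]
    (Δ : Set (Finset α)) : Prop :=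
  ∀ d : ℕ, IsCM α K (pureSkel Δ d)

/-! ## The double directed string `Lₙ` and the double directed cycle `Pₙ`. -/

/-- Source map of `Lₙ`: `inl i` is the edge `i → i+1`, `inr i` the edge `i+1 → i`. -/
def sL (n : ℕ) : Fin n ⊕ Fin n → Fin (n + 1) := Sum.elim Fin.castSucc Fin.succ

/-- Target map of `Lₙ`. -/
def tL (n : ℕ) : Fin n ⊕ Fin n → Fin (n + 1) := Sum.elim Fin.succ Fin.castSucc

/-- Source map of `Pₙ`: `inl i` is the edge `eᵢ : i → i+1`, `inr i` is `eᵢ' : i+1 → i`. -/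
def sP (n : ℕ) : ZMod n ⊕ ZMod n → ZMod n := Sum.elim id (fun i => i + 1)

/-- Target map of `Pₙ`. -/
def tP (n : ℕ) : ZMod n ⊕ ZMod n → ZMod n := Sum.elim (fun i => i + 1) id


section Aux

variable {V E : Type}

private lemma zmodValInj {n : ℕ} [NeZero n] {a b : ZMod n} (h : a.val = b.val) : a = b := by
  have ha := ZMod.natCast_rightInverse (n := n) a
  have hb := ZMod.natCast_rightInverse (n := n) b
  rw [← ha, ← hb, h]

private lemma dirCycle_rotate (s t : E → V) {n : ℕ} {τ : Finset E}
    (h : IsDirCycle s t n τ) {f : E} (hf : f ∈ τ) :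
    ∃ g : ZMod n → E, g 0 = f ∧ Function.Injective g ∧ (∀ x, x ∈ τ ↔ ∃ i, g i = x) ∧
      Function.Injective (fun i => s (g i)) ∧ ∀ i, t (g i) = s (g (i + 1)) := by
  obtain ⟨hn, g, hginj, hgcov, hsinj, hstep⟩ := h
  obtain ⟨i₀, hi₀⟩ := (hgcov f).1 hf
  refine ⟨fun i => g (i + i₀), by simpa using hi₀, ?_, ?_, ?_, ?_⟩
  · intro a b hab; exact add_right_cancel (hginj hab)
  · intro x; rw [hgcov]; constructor
    · rintro ⟨i, hi⟩; exact ⟨i - i₀, by simpa [sub_add_cancel] using hi⟩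
    · rintro ⟨i, hi⟩; exact ⟨i + i₀, hi⟩
  · intro a b hab
    have h2 : a + i₀ = b + i₀ := hsinj hab
    exact add_right_cancel h2
  · intro i
    have h2 := hstep (i + i₀)
    rwa [show i + i₀ + 1 = i + 1 + i₀ by ring] at h2

private lemma linearForest_mono {s t : E → V} {σ τ : Finset E}
    (h : IsLinearForest s t σ) (hsub : τ ⊆ σ) : IsLinearForest s t τ :=
  ⟨fun a ha b hb => h.1 a (hsub ha) b (hsub hb),
   fun a ha b hb => h.2.1 a (hsub ha) b (hsub hb),
   fun n ρ hρ => h.2.2 n ρ (hρ.trans hsub)⟩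

end Aux

/-- The link of an edge `e` (a vertex of `Dlf(D)`) in the directed
linear forest complex equals the directed linear forest complex of `D ↓ e`, the
multidigraph obtained by deleting every edge with source `s e`, every edge with target
`t e`, and every edge with unordered endpoint pair `{s e, t e}`, and then identifying
`s e` with `t e`. -/
theorem statement_2 {V E : Type} [DecidableEq V] [DecidableEq E]
    (s t : E → V) (e : E) (he : ({e} : Finset E) ∈ Dlf s t) :
    linkC (Dlf s t) e =
      {τ : Finset E |
        ∃ τ' : Finset {f : E // s f ≠ s e ∧ t f ≠ t e ∧ ¬ SameEnds s t f e},
          τ = τ'.image Subtype.val ∧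
          τ' ∈ Dlf (fun f => if s f.val = t e then s e else s f.val)
                   (fun f => if t f.val = t e then s e else t f.val)} := by
  classical
  have hsub1 : ∀ a b : ZMod 1, a = b := by decide
  have hne : s e ≠ t e := by
    intro h
    refine he.2.2 1 {e} (Finset.Subset.refl _)
      ⟨Nat.one_pos, fun _ => e, fun a b _ => hsub1 a b, ?_, fun a b _ => hsub1 a b,
        fun _ => h.symm⟩
    intro x
    simp only [Finset.mem_singleton]
    exact ⟨fun hx => ⟨0, hx.symm⟩, fun ⟨_, hi⟩ => hi.symm⟩
  ext τ
  simp only [linkC, Dlf, Set.mem_setOf_eq]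
  constructor
  · rintro ⟨hτ, heτ, hins⟩
    have hei : e ∈ insert e τ := Finset.mem_insert_self e τ
    have hpmem : ∀ f ∈ τ, s f ≠ s e ∧ t f ≠ t e ∧ ¬ SameEnds s t f e := by
      intro f hf
      have hfe : f ≠ e := fun h => heτ (h ▸ hf)
      have hfi : f ∈ insert e τ := Finset.mem_insert_of_mem hf
      have hs1 : s f ≠ s e := hins.1 f hfi e hei hfe
      have ht1 : t f ≠ t e := hins.2.1 f hfi e hei hfe
      refine ⟨hs1, ht1, ?_⟩
      rintro (⟨h1, _⟩ | ⟨h1, h2⟩)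
      · exact hs1 h1
      · have h01 : ∀ i : ZMod 2, i = 0 ∨ i = 1 := by decide
        have h10 : ¬((1 : ZMod 2) = 0) := by decide
        refine hins.2.2 2 {e, f} ?_
          ⟨by norm_num, fun i => if i = 0 then e else f, ?_, ?_, ?_, ?_⟩
        · intro x hx
          rcases Finset.mem_insert.1 hx with h | h
          · exact h ▸ hei
          · exact (Finset.mem_singleton.1 h) ▸ hfi
        · intro a b hab
          simp only [] at hab
          rcases h01 a with ha | ha <;> rcases h01 b with hb | hb <;> subst ha <;> subst hb
          · rfl
          · exfalso; rw [if_pos rfl, if_neg h10] at hab; exact hfe hab.symm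
          · exfalso; rw [if_neg h10, if_pos rfl] at hab; exact hfe hab
          · rfl
        · intro x
          constructor
          · intro hx
            rcases Finset.mem_insert.1 hx with h | h
            · refine ⟨0, ?_⟩
              show (if (0 : ZMod 2) = 0 then e else f) = x
              rw [if_pos rfl, h]
            · refine ⟨1, ?_⟩
              show (if (1 : ZMod 2) = 0 then e else f) = x
              rw [if_neg h10, (Finset.mem_singleton.1 h)]
          · rintro ⟨i, rfl⟩
            show (if i = 0 then e else f) ∈ ({e, f} : Finset E)
            split_ifs
            · exact Finset.mem_insert_self _ _
            · exact Finset.mem_insert_of_mem (Finset.mem_singleton_self f)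
        · intro a b hab
          simp only [] at hab
          rcases h01 a with ha | ha <;> rcases h01 b with hb | hb <;> subst ha <;> subst hb
          · rfl
          · exfalso; rw [if_pos rfl, if_neg h10] at hab; exact hs1 hab.symm
          · exfalso; rw [if_neg h10, if_pos rfl] at hab; exact hs1 hab
          · rfl
        · intro i
          rcases h01 i with hi | hi <;> subst hi
          · show t (if (0 : ZMod 2) = 0 then e else f) = s (if (0 + 1 : ZMod 2) = 0 then e else f)
            rw [if_pos rfl, if_neg (by decide : ¬((0 + 1 : ZMod 2) = 0))]
            exact h1.symm
          · show t (if (1 : ZMod 2) = 0 then e else f) = s (if (1 + 1 : ZMod 2) = 0 then e else f)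
            rw [if_neg h10, if_pos (by decide : (1 + 1 : ZMod 2) = 0)]
            exact h2
    refine ⟨Finset.subtype _ τ, ?_, ?_, ?_, ?_⟩
    · ext x
      simp only [Finset.mem_image, Finset.mem_subtype]
      constructor
      · intro hx
        exact ⟨⟨x, hpmem x hx⟩, hx, rfl⟩
      · rintro ⟨a, ha, rfl⟩
        exact ha
    · rintro a hamem b hbmem hab
      have haτ : a.val ∈ τ := Finset.mem_subtype.1 hamem
      have hbτ : b.val ∈ τ := Finset.mem_subtype.1 hbmem
      have hab' : a.val ≠ b.val := fun h => hab (Subtype.ext h)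
      have hsv : s a.val ≠ s b.val :=
        hins.1 a.val (Finset.mem_insert_of_mem haτ) b.val (Finset.mem_insert_of_mem hbτ) hab'
      show (if s a.val = t e then s e else s a.val) ≠ (if s b.val = t e then s e else s b.val)
      split_ifs with h1 h2 h3
      · exact absurd (h1.trans h2.symm) hsv
      · exact Ne.symm b.2.1
      · exact a.2.1
      · exact hsv
    · rintro a hamem b hbmem hab
      have haτ : a.val ∈ τ := Finset.mem_subtype.1 hamem
      have hbτ : b.val ∈ τ := Finset.mem_subtype.1 hbmem
      show (if t a.val = t e then s e else t a.val) ≠ (if t b.val = t e then s e else t b.val)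
      rw [if_neg a.2.2.1, if_neg b.2.2.1]
      exact hins.2.1 a.val (Finset.mem_insert_of_mem haτ) b.val (Finset.mem_insert_of_mem hbτ)
        (fun h => hab (Subtype.ext h))
    · intro n ρ hρ hcyc
      have hn : 0 < n := hcyc.1
      haveI : NeZero n := ⟨hn.ne'⟩
      by_cases hbreak : ∃ f₀ ∈ ρ, s f₀.val = t e
      · obtain ⟨f₀, hf₀ρ, hf₀⟩ := hbreak
        obtain ⟨g, hg0, hginj, hgcov, hsinj, hstep⟩ := dirCycle_rotate _ _ hcyc hf₀ρ
        have hbr : s (g 0).val = t e := by rw [hg0]; exact hf₀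
        have hgρ : ∀ j : ZMod n, g j ∈ ρ := fun j => (hgcov (g j)).2 ⟨j, rfl⟩
        have hgτ : ∀ j : ZMod n, (g j).val ∈ τ := fun j => Finset.mem_subtype.1 (hρ (hgρ j))
        have huniq : ∀ j : ZMod n, s (g j).val = t e → j = 0 := by
          intro j hj
          have h2 : (if s (g j).val = t e then s e else s (g j).val)
              = (if s (g 0).val = t e then s e else s (g 0).val) := by
            rw [if_pos hj, if_pos hbr]
          exact hsinj h2
        haveI : NeZero (n + 1) := ⟨n.succ_ne_zero⟩
        haveI : Fact (1 < n + 1) := ⟨by omega⟩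
        set c : ZMod (n + 1) → E :=
          fun i => if i = 0 then e else (g (((i.val - 1 : ℕ) : ZMod n))).val with hc
        have hc0 : c 0 = e := by simp [hc]
        have hcval : ∀ i : ZMod (n + 1), i ≠ 0 →
            c i = (g (((i.val - 1 : ℕ) : ZMod n))).val := by
          intro i hi; simp only [hc]; rw [if_neg hi]
        have hidx : ∀ {a b : ZMod (n + 1)}, a ≠ 0 → b ≠ 0 →
            ((a.val - 1 : ℕ) : ZMod n) = ((b.val - 1 : ℕ) : ZMod n) → a = b := by
          intro a b ha hb hab
          have ha1 : a.val ≠ 0 := fun h => ha ((ZMod.val_eq_zero a).1 h)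
          have hb1 : b.val ≠ 0 := fun h => hb ((ZMod.val_eq_zero b).1 h)
          have ha2 := ZMod.val_lt a
          have hb2 := ZMod.val_lt b
          have h3 := congrArg ZMod.val hab
          rw [ZMod.val_cast_of_lt (by omega), ZMod.val_cast_of_lt (by omega)] at h3
          exact zmodValInj (by omega : a.val = b.val)
        refine hins.2.2 (n + 1) (insert e (ρ.image Subtype.val)) ?_
          ⟨n.succ_pos, c, ?_, ?_, ?_, ?_⟩
        · intro x hx
          rcases Finset.mem_insert.1 hx with rfl | hx
          · exact hei
          · obtain ⟨a, haρ, rfl⟩ := Finset.mem_image.1 hx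
            exact Finset.mem_insert_of_mem (Finset.mem_subtype.1 (hρ haρ))
        · intro a b hab
          by_cases ha : a = 0 <;> by_cases hb : b = 0
          · rw [ha, hb]
          · exfalso
            rw [ha, hc0, hcval b hb] at hab
            have h4 := hgτ ((b.val - 1 : ℕ) : ZMod n)
            rw [← hab] at h4
            exact heτ h4
          · exfalso
            rw [hb, hc0, hcval a ha] at hab
            have h4 := hgτ ((a.val - 1 : ℕ) : ZMod n)
            rw [hab] at h4
            exact heτ h4
          · rw [hcval a ha, hcval b hb] at hab
            exact hidx ha hb (hginj (Subtype.ext hab))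
        · intro x
          constructor
          · intro hx
            rcases Finset.mem_insert.1 hx with rfl | hx
            · exact ⟨0, hc0⟩
            · obtain ⟨a, haρ, rfl⟩ := Finset.mem_image.1 hx
              obtain ⟨j, rfl⟩ := (hgcov a).1 haρ
              refine ⟨((j.val + 1 : ℕ) : ZMod (n + 1)), ?_⟩
              have hv : (((j.val + 1 : ℕ) : ZMod (n + 1))).val = j.val + 1 :=
                ZMod.val_cast_of_lt (by have := ZMod.val_lt j; omega)
              have hne0 : ((j.val + 1 : ℕ) : ZMod (n + 1)) ≠ 0 := by
                intro h0
                rw [h0, ZMod.val_zero] at hv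
                omega
              rw [hcval _ hne0]
              have h5 : ((((j.val + 1 : ℕ) : ZMod (n + 1))).val - 1 : ℕ) = j.val := by
                rw [hv]; omega
              have h6 : (((((j.val + 1 : ℕ) : ZMod (n + 1))).val - 1 : ℕ) : ZMod n) = j := by
                rw [h5]; exact ZMod.natCast_rightInverse j
              rw [h6]
          · rintro ⟨i, rfl⟩
            by_cases hi : i = 0
            · rw [hi, hc0]; exact Finset.mem_insert_self _ _
            · rw [hcval i hi]
              exact Finset.mem_insert_of_mem (Finset.mem_image_of_mem _ (hgρ _))
        · intro a b hab
          simp only [] at hab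
          by_cases ha : a = 0 <;> by_cases hb : b = 0
          · rw [ha, hb]
          · exfalso
            rw [ha, hc0, hcval b hb] at hab
            exact (g _).2.1 hab.symm
          · exfalso
            rw [hb, hc0, hcval a ha] at hab
            exact (g _).2.1 hab
          · rw [hcval a ha, hcval b hb] at hab
            have h4 : ((a.val - 1 : ℕ) : ZMod n) = ((b.val - 1 : ℕ) : ZMod n) :=
              hsinj (congrArg (fun v => if v = t e then s e else v) hab)
            exact hidx ha hb h4
        · intro i
          by_cases hi : i = 0
          · subst hi
            rw [hc0]
            have h1ne : (0 + 1 : ZMod (n + 1)) ≠ 0 := by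
              rw [zero_add]
              intro h
              have h2 := ZMod.val_one (n + 1)
              rw [h, ZMod.val_zero] at h2
              omega
            rw [hcval _ h1ne]
            have h3 : ((((0 + 1 : ZMod (n + 1))).val - 1 : ℕ) : ZMod n) = 0 := by
              rw [zero_add, ZMod.val_one]
              simp
            rw [h3]
            exact hbr.symm
          · have hvpos : 1 ≤ i.val :=
              Nat.one_le_iff_ne_zero.2 (fun h => hi ((ZMod.val_eq_zero i).1 h))
            have hvlt := ZMod.val_lt i
            by_cases hiv : i.val < n
            · have h1 : (i + 1).val = i.val + 1 := by
                rw [ZMod.val_add_of_lt]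
                · rw [ZMod.val_one]
                · rw [ZMod.val_one]; omega
              have hi1 : i + 1 ≠ 0 := by
                intro h
                rw [h, ZMod.val_zero] at h1
                omega
              rw [hcval i hi, hcval _ hi1]
              have h2 : (((i + 1).val - 1 : ℕ) : ZMod n) = ((i.val : ℕ) : ZMod n) := by
                rw [h1, Nat.add_sub_cancel]
              rw [h2]
              have hja : (((i.val - 1 : ℕ) : ZMod n)) + 1 = ((i.val : ℕ) : ZMod n) := by
                have h' : ((i.val - 1 : ℕ) + 1 : ℕ) = i.val := by omega
                calc ((i.val - 1 : ℕ) : ZMod n) + 1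
                    = (((i.val - 1 : ℕ) + 1 : ℕ) : ZMod n) := by push_cast; ring
                  _ = ((i.val : ℕ) : ZMod n) := by rw [h']
              have hnb : s (g ((i.val : ℕ) : ZMod n)).val ≠ t e := by
                intro hh
                have h4 := huniq _ hh
                have hv0 : (((i.val : ℕ) : ZMod n)).val = i.val := ZMod.val_cast_of_lt hiv
                rw [h4, ZMod.val_zero] at hv0
                omega
              have hst := hstep (((i.val - 1 : ℕ) : ZMod n))
              rw [hja] at hst
              rw [if_neg (g _).2.2.1, if_neg hnb] at hst
              exact hst
            · have hin : i.val = n := by omega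
              have hi1 : i + 1 = 0 := by
                have h2 : ((i.val : ℕ) : ZMod (n + 1)) = i := ZMod.natCast_rightInverse i
                rw [← h2, hin]
                have h3 : ((n : ℕ) : ZMod (n + 1)) + 1 = (((n + 1 : ℕ)) : ZMod (n + 1)) := by
                  push_cast; ring
                rw [h3, ZMod.natCast_self]
              rw [hi1, hc0, hcval i hi]
              have hst := hstep (((i.val - 1 : ℕ) : ZMod n))
              have hj1 : (((i.val - 1 : ℕ) : ZMod n)) + 1 = 0 := by
                rw [hin]
                have h' : ((n - 1 : ℕ) : ZMod n) + 1 = (((n - 1) + 1 : ℕ) : ZMod n) := by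
                  push_cast; ring
                rw [h', show (n - 1) + 1 = n from by omega, ZMod.natCast_self]
              rw [hj1] at hst
              rw [if_neg (g _).2.2.1, if_pos hbr] at hst
              exact hst
      · push_neg at hbreak
        obtain ⟨hn', g, hginj, hgcov, hsinj, hstep⟩ := hcyc
        have hgρ : ∀ j : ZMod n, g j ∈ ρ := fun j => (hgcov (g j)).2 ⟨j, rfl⟩
        refine hins.2.2 n (ρ.image Subtype.val) ?_ ⟨hn, fun i => (g i).val, ?_, ?_, ?_, ?_⟩
        · intro x hx
          obtain ⟨a, haρ, rfl⟩ := Finset.mem_image.1 hx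
          exact Finset.mem_insert_of_mem (Finset.mem_subtype.1 (hρ haρ))
        · intro a b hab
          exact hginj (Subtype.ext hab)
        · intro x
          constructor
          · intro hx
            obtain ⟨a, haρ, rfl⟩ := Finset.mem_image.1 hx
            obtain ⟨i, rfl⟩ := (hgcov a).1 haρ
            exact ⟨i, rfl⟩
          · rintro ⟨i, rfl⟩
            exact Finset.mem_image_of_mem _ (hgρ i)
        · intro a b hab
          refine hsinj ?_
          show (if s (g a).val = t e then s e else s (g a).val)
            = (if s (g b).val = t e then s e else s (g b).val)
          rw [if_neg (hbreak _ (hgρ a)), if_neg (hbreak _ (hgρ b))]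
          exact hab
        · intro i
          have hst := hstep i
          simp only [] at hst
          rw [if_neg (g i).2.2.1, if_neg (hbreak _ (hgρ (i + 1)))] at hst
          exact hst
  · rintro ⟨τ', rfl, hτ'⟩
    have hmem_p : ∀ x ∈ τ'.image Subtype.val,
        s x ≠ s e ∧ t x ≠ t e ∧ ¬ SameEnds s t x e := by
      intro x hx
      obtain ⟨a, _, rfl⟩ := Finset.mem_image.1 hx
      exact a.2
    have henotin : e ∉ τ'.image Subtype.val := fun h => (hmem_p e h).1 rfl
    have hval_mem : ∀ a : {f : E // s f ≠ s e ∧ t f ≠ t e ∧ ¬ SameEnds s t f e},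
        a.val ∈ τ'.image Subtype.val → a ∈ τ' := by
      intro a ha
      obtain ⟨b, hb, hba⟩ := Finset.mem_image.1 ha
      rwa [← Subtype.ext hba]
    have hφ : ∀ x y : V, x ≠ s e → y ≠ s e →
        (if x = t e then s e else x) = (if y = t e then s e else y) → x = y := by
      intro x y hx hy hxy
      split_ifs at hxy with h1 h2 h3
      · exact h1.trans h2.symm
      · exact absurd hxy.symm hy
      · exact absurd hxy hx
      · exact hxy
    have hinsLF : IsLinearForest s t (insert e (τ'.image Subtype.val)) := by
      refine ⟨?_, ?_, ?_⟩
      · intro x hx y hy hxy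
        rcases Finset.mem_insert.1 hx with rfl | hx' <;> rcases Finset.mem_insert.1 hy with rfl | hy'
        · exact absurd rfl hxy
        · exact Ne.symm (hmem_p y hy').1
        · exact (hmem_p x hx').1
        · obtain ⟨a, haτ, rfl⟩ := Finset.mem_image.1 hx'
          obtain ⟨b, hbτ, rfl⟩ := Finset.mem_image.1 hy'
          intro hsv
          have hab : a ≠ b := fun h => hxy (congrArg Subtype.val h)
          exact hτ'.1 a haτ b hbτ hab (congrArg (fun v => if v = t e then s e else v) hsv)
      · intro x hx y hy hxy
        rcases Finset.mem_insert.1 hx with rfl | hx' <;> rcases Finset.mem_insert.1 hy with rfl | hy'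
        · exact absurd rfl hxy
        · exact Ne.symm (hmem_p y hy').2.1
        · exact (hmem_p x hx').2.1
        · obtain ⟨a, haτ, rfl⟩ := Finset.mem_image.1 hx'
          obtain ⟨b, hbτ, rfl⟩ := Finset.mem_image.1 hy'
          intro htv
          have hab : a ≠ b := fun h => hxy (congrArg Subtype.val h)
          refine hτ'.2.1 a haτ b hbτ hab ?_
          show (if t a.val = t e then s e else t a.val) = (if t b.val = t e then s e else t b.val)
          rw [if_neg a.2.2.1, if_neg b.2.2.1]
          exact htv
      · intro n ρ hρ hcyc
        have hn : 0 < n := hcyc.1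
        haveI : NeZero n := ⟨hn.ne'⟩
        by_cases hein : e ∈ ρ
        · obtain ⟨g, hg0, hginj, hgcov, hsinj, hstep⟩ := dirCycle_rotate s t hcyc hein
          rcases Nat.lt_or_ge n 2 with hn2 | hn2
          · have hn1 : n = 1 := by omega
            subst hn1
            have h0 : (0 + 1 : ZMod 1) = 0 := hsub1 _ _
            have h2 := hstep 0
            rw [h0, hg0] at h2
            exact hne h2.symm
          · haveI : NeZero (n - 1) := ⟨by omega⟩
            haveI : Fact (1 < n) := ⟨hn2⟩
            have hs1 : s (g 1) = t e := by
              have h2 := hstep 0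
              rw [hg0, zero_add] at h2
              exact h2.symm
            have hs_uniq : ∀ i : ZMod n, s (g i) = t e → i = 1 := by
              intro i hi
              exact hsinj (hi.trans hs1.symm)
            have hgmem : ∀ j : ZMod n, j ≠ 0 → (g j) ∈ τ'.image Subtype.val := by
              intro j hj
              have h1 : g j ∈ insert e (τ'.image Subtype.val) := hρ ((hgcov (g j)).2 ⟨j, rfl⟩)
              rcases Finset.mem_insert.1 h1 with h2 | h2
              · exact absurd (hginj (h2.trans hg0.symm)) hj
              · exact h2
            have hp : ∀ j : ZMod n, j ≠ 0 →
                s (g j) ≠ s e ∧ t (g j) ≠ t e ∧ ¬ SameEnds s t (g j) e :=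
              fun j hj => hmem_p _ (hgmem j hj)
            have hqlt : ∀ j : ZMod (n - 1), j.val + 1 < n := by
              intro j; have := ZMod.val_lt j; omega
            have hqval : ∀ j : ZMod (n - 1), (((j.val + 1 : ℕ) : ZMod n)).val = j.val + 1 :=
              fun j => ZMod.val_cast_of_lt (hqlt j)
            have hqne : ∀ j : ZMod (n - 1), ((j.val + 1 : ℕ) : ZMod n) ≠ 0 := by
              intro j h
              have h2 := hqval j
              rw [h, ZMod.val_zero] at h2
              omega
            refine hτ'.2.2 (n - 1) (τ'.filter (fun a => a.val ∈ ρ)) (Finset.filter_subset _ _)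
              ⟨by omega, fun j => ⟨g ((j.val + 1 : ℕ) : ZMod n), hp _ (hqne j)⟩, ?_, ?_, ?_, ?_⟩
            · intro a b hab
              have h1 : g ((a.val + 1 : ℕ) : ZMod n) = g ((b.val + 1 : ℕ) : ZMod n) :=
                congrArg Subtype.val hab
              have h2 := hginj h1
              have h3 := congrArg ZMod.val h2
              rw [hqval a, hqval b] at h3
              exact zmodValInj (by omega : a.val = b.val)
            · intro a
              simp only [Finset.mem_filter]
              constructor
              · rintro ⟨haτ, haρ⟩
                obtain ⟨i, hi⟩ := (hgcov a.val).1 haρ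
                have hi0 : i ≠ 0 := by
                  intro h
                  rw [h, hg0] at hi
                  exact a.2.1 (by rw [← hi])
                have hiv : 1 ≤ i.val :=
                  Nat.one_le_iff_ne_zero.2 (fun h => hi0 ((ZMod.val_eq_zero i).1 h))
                have hivlt := ZMod.val_lt i
                refine ⟨((i.val - 1 : ℕ) : ZMod (n - 1)), ?_⟩
                apply Subtype.ext
                show g (((((i.val - 1 : ℕ) : ZMod (n - 1))).val + 1 : ℕ) : ZMod n) = a.val
                have hjv : (((i.val - 1 : ℕ) : ZMod (n - 1))).val = i.val - 1 :=
                  ZMod.val_cast_of_lt (by omega)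
                rw [hjv, show (i.val - 1 + 1 : ℕ) = i.val from by omega,
                  ZMod.natCast_rightInverse i]
                exact hi
              · rintro ⟨j, rfl⟩
                exact ⟨hval_mem _ (hgmem _ (hqne j)), (hgcov _).2 ⟨_, rfl⟩⟩
            · intro a b hab
              have h1 : s (g ((a.val + 1 : ℕ) : ZMod n)) = s (g ((b.val + 1 : ℕ) : ZMod n)) :=
                hφ _ _ (hp _ (hqne a)).1 (hp _ (hqne b)).1 hab
              have h2 := hsinj h1
              have h3 := congrArg ZMod.val h2
              rw [hqval a, hqval b] at h3
              exact zmodValInj (by omega : a.val = b.val)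
            · intro j
              show (if t (g ((j.val + 1 : ℕ) : ZMod n)) = t e then s e
                  else t (g ((j.val + 1 : ℕ) : ZMod n)))
                = (if s (g ((((j + 1).val + 1 : ℕ)) : ZMod n)) = t e then s e
                  else s (g ((((j + 1).val + 1 : ℕ)) : ZMod n)))
              rw [if_neg (hp _ (hqne j)).2.1]
              by_cases hj : j.val + 1 < n - 1
              · haveI : Fact (1 < n - 1) := ⟨by omega⟩
                have h1 : (j + 1).val = j.val + 1 := by
                  rw [ZMod.val_add_of_lt]
                  · rw [ZMod.val_one]
                  · rw [ZMod.val_one]; omega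
                have hq1 : (((j + 1).val + 1 : ℕ) : ZMod n) = (((j.val + 1 : ℕ) : ZMod n)) + 1 := by
                  rw [h1]
                  push_cast
                  ring
                rw [hq1]
                have hnb : s (g ((((j.val + 1 : ℕ) : ZMod n)) + 1)) ≠ t e := by
                  intro hh
                  have h4 := hs_uniq _ hh
                  have h5 : (((j.val + 1 : ℕ) : ZMod n)) = 0 := by
                    have h6 := h4.trans (zero_add (1 : ZMod n)).symm
                    exact add_right_cancel h6
                  exact hqne j h5
                rw [if_neg hnb]
                exact hstep (((j.val + 1 : ℕ) : ZMod n))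
              · have hjv2 : j.val + 1 = n - 1 := by have := ZMod.val_lt j; omega
                have hj10 : j + 1 = 0 := by
                  have h2 : ((j.val : ℕ) : ZMod (n - 1)) = j := ZMod.natCast_rightInverse j
                  rw [← h2]
                  have h3 : ((j.val : ℕ) : ZMod (n - 1)) + 1 = (((j.val + 1 : ℕ)) : ZMod (n - 1)) := by
                    push_cast; ring
                  rw [h3, hjv2, ZMod.natCast_self]
                rw [hj10]
                have h0v : ((((0 : ZMod (n - 1)).val + 1 : ℕ)) : ZMod n) = 1 := by
                  rw [ZMod.val_zero]
                  norm_num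
                rw [h0v, if_pos hs1]
                have hst := hstep (((j.val + 1 : ℕ) : ZMod n))
                have hq0 : (((j.val + 1 : ℕ) : ZMod n)) + 1 = 0 := by
                  rw [hjv2]
                  have h3 : ((n - 1 : ℕ) : ZMod n) + 1 = (((n - 1 + 1 : ℕ)) : ZMod n) := by
                    push_cast; ring
                  rw [h3, show n - 1 + 1 = n from by omega, ZMod.natCast_self]
                rw [hq0, hg0] at hst
                exact hst
        · obtain ⟨hn', g, hginj, hgcov, hsinj, hstep⟩ := hcyc
          have hgρ : ∀ j : ZMod n, g j ∈ ρ := fun j => (hgcov (g j)).2 ⟨j, rfl⟩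
          have hgmem : ∀ j : ZMod n, g j ∈ τ'.image Subtype.val := by
            intro j
            rcases Finset.mem_insert.1 (hρ (hgρ j)) with h | h
            · exact absurd (h ▸ hgρ j) hein
            · exact h
          have hp2 : ∀ j : ZMod n, s (g j) ≠ s e ∧ t (g j) ≠ t e ∧ ¬ SameEnds s t (g j) e :=
            fun j => hmem_p _ (hgmem j)
          refine hτ'.2.2 n (τ'.filter (fun a => a.val ∈ ρ)) (Finset.filter_subset _ _)
            ⟨hn, fun j => ⟨g j, hp2 j⟩, ?_, ?_, ?_, ?_⟩
          · intro a b hab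
            exact hginj (congrArg Subtype.val hab)
          · intro a
            simp only [Finset.mem_filter]
            constructor
            · rintro ⟨haτ, haρ⟩
              obtain ⟨i, hi⟩ := (hgcov a.val).1 haρ
              exact ⟨i, Subtype.ext hi⟩
            · rintro ⟨j, rfl⟩
              exact ⟨hval_mem _ (hgmem j), hgρ j⟩
          · intro a b hab
            exact hsinj (hφ _ _ (hp2 a).1 (hp2 b).1 hab)
          · intro j
            show (if t (g j) = t e then s e else t (g j))
              = (if s (g (j + 1)) = t e then s e else s (g (j + 1)))
            rw [if_neg (hp2 j).2.1, ← hstep j, if_neg (hp2 j).2.1]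
    exact ⟨linearForest_mono hinsLF (Finset.subset_insert _ _), henotin, hinsLF⟩


end ArXiv
end

section
/- Let D be a multidigraph and e an edge of D. Then the link of e in the directed tree complex DT(D) equals the directed tree complex of the multidigraph obtained by deleting all edges with target t(e) and all edges with unordered endpoint pair {s(e),t(e)}, then identifying s(e) with t(e); and the deletion of e in DT(D) equals DT(D − e). -/
namespace ArXiv

/-! Directed cycles inside `σ` are the same as closed walks of the step relation
`WalkRel s t σ`: a closed walk visiting some source twice contains a strictly shorter closed
walk, so a shortest one is a directed cycle. If no edge of `τ` enters `t e`, the walks of the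
contraction inside `τ` are exactly the walks inside `insert e τ` with every passage through `e`
short-circuited, and since `e` is not a loop this preserves the existence of closed walks.
The edges excluded from the contraction are exactly those that cannot share a face with `e`:
a second edge into `t e`, or an edge closing a directed 2-cycle with `e`. Restricting the
multidigraph to a subtype of its edges, as both sides of the theorem do, does not change which
edge sets are faces. -/

open Relation

lemma zmod_val_add_one_cases {n : ℕ} [NeZero n] (i : ZMod n) :
    (i + 1).val = i.val + 1 ∨ (i.val + 1 = n ∧ (i + 1).val = 0) := by
  have hi := i.val_lt
  rw [ZMod.val_add, ZMod.val_one_eq_one_mod]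
  rcases Nat.lt_or_ge 1 n with hn | hn
  · rw [Nat.mod_eq_of_lt hn]
    rcases Nat.lt_or_ge (i.val + 1) n with h | h
    · exact Or.inl (Nat.mod_eq_of_lt h)
    · exact Or.inr ⟨by omega, by rw [show i.val + 1 = n by omega, Nat.mod_self]⟩
  · obtain rfl : n = 1 := by have := NeZero.ne n; omega
    right; omega

section

variable {α : Type}

lemma transGen_self_of_forall_zmod {n : ℕ} [NeZero n] {R : α → α → Prop} {g : ZMod n → α}
    (hg : ∀ i, R (g i) (g (i + 1))) : TransGen R (g 0) (g 0) := by
  have key : ∀ k : ℕ, TransGen R (g 0) (g (k + 1 : ℕ)) := by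
    intro k
    induction k with
    | zero => simpa using TransGen.single (hg 0)
    | succ k ih => exact ih.tail (by simpa using hg (k + 1 : ℕ))
  simpa [Nat.sub_add_cancel NeZero.one_le] using key (n - 1)

lemma exists_zmod_chain_of_transGen_self {R : α → α → Prop} {a : α} (h : TransGen R a a) :
    ∃ n, 0 < n ∧ ∃ g : ZMod n → α, ∀ i, R (g i) (g (i + 1)) := by
  obtain ⟨b, hab, hba⟩ := TransGen.tail'_iff.mp h
  obtain ⟨l, hchain, hlast⟩ := List.exists_isChain_cons_of_relationReflTransGen hab
  set w := a :: l
  have : NeZero w.length := ⟨by simp [w]⟩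
  refine ⟨w.length, this.pos, fun i => w[i.val]'i.val_lt, fun i => ?_⟩
  rcases zmod_val_add_one_cases i with h | ⟨hlen, h⟩
  · simp only [h]
    exact hchain.getElem _ (by rw [← h]; exact (i + 1).val_lt)
  · simp only [h]
    rw [List.getLast_eq_getElem] at hlast
    simp only [show i.val = w.length - 1 by omega]
    exact hlast ▸ hba

lemma exists_transGen_onFun_self_iff {β : Type} {R : β → β → Prop} {φ : α → β}
    (hR : ∀ a b, R a b → a ∈ Set.range φ) :
    (∃ a, TransGen (Function.onFun R φ) a a) ↔ ∃ b, TransGen R b b := by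
  refine ⟨fun ⟨a, ha⟩ => ⟨φ a, TransGen.lift φ (fun _ _ h => h) _ _ ha⟩, fun ⟨b, hb⟩ => ?_⟩
  obtain ⟨c, hbc, -⟩ := TransGen.head'_iff.mp hb
  obtain ⟨a, rfl⟩ := hR _ _ hbc
  suffices ∀ c, TransGen R (φ a) c → ∀ y, c = φ y → TransGen (Function.onFun R φ) a y from
    ⟨a, this _ hb a rfl⟩
  intro c hc
  induction hc with
  | single hac => rintro y rfl; exact .single hac
  | tail _ hcd ih =>
    rintro y rfl
    obtain ⟨z, rfl⟩ := hR _ _ hcd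
    exact (ih z rfl).tail hcd

def bypass (R : α → α → Prop) (e x y : α) : Prop :=
  x ≠ e ∧ y ≠ e ∧ (R x y ∨ R x e ∧ R e y)

lemma transGen_bypass_of_transGen {R : α → α → Prop} {e x y : α} (hee : ¬ R e e) (hx : x ≠ e)
    (h : TransGen R x y) :
    (y ≠ e → TransGen (bypass R e) x y) ∧
      (y = e → ∃ d ≠ e, ReflTransGen (bypass R e) x d ∧ R d e) := by
  induction h with
  | @single y hxy =>
    exact ⟨fun hy => .single ⟨hx, hy, .inl hxy⟩, fun hy => ⟨x, hx, .refl, hy ▸ hxy⟩⟩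
  | @tail c y _ hcy ih =>
    by_cases hc : c = e
    · rw [hc] at hcy
      have hy : y ≠ e := by rintro rfl; exact hee hcy
      obtain ⟨d, hd, hxd, hde⟩ := ih.2 hc
      exact ⟨fun _ => .tail' hxd ⟨hd, hy, .inr ⟨hde, hcy⟩⟩, fun h => absurd h hy⟩
    · have hxc := ih.1 hc
      exact ⟨fun hy => hxc.tail ⟨hc, hy, .inl hcy⟩,
        fun hy => ⟨c, hc, hxc.to_reflTransGen, hy ▸ hcy⟩⟩

lemma exists_transGen_bypass_self_iff {R : α → α → Prop} {e : α} (hee : ¬ R e e) :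
    (∃ a, TransGen (bypass R e) a a) ↔ ∃ a, TransGen R a a := by
  constructor
  · rintro ⟨a, ha⟩
    refine ⟨a, TransGen.closed (fun x y hxy => ?_) _ _ ha⟩
    rcases hxy.2.2 with h | ⟨hxe, hey⟩
    exacts [.single h, .tail (.single hxe) hey]
  · rintro ⟨a, ha⟩
    by_cases hae : a = e
    · obtain ⟨c, hec, hce⟩ := TransGen.head'_iff.mp (hae ▸ ha)
      have hc : c ≠ e := by rintro rfl; exact hee hec
      exact ⟨c, (transGen_bypass_of_transGen hee hc (.tail' hce hec)).1 hc⟩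
    · exact ⟨a, (transGen_bypass_of_transGen hee hae ha).1 hae⟩

end

variable {V E : Type}

def WalkRel (s t : E → V) (σ : Finset E) (x y : E) : Prop :=
  x ∈ σ ∧ y ∈ σ ∧ t x = s y

lemma exists_closedWalk_sources_injective {s t : E → V} (n : ℕ) (hn : 0 < n) (g : ZMod n → E)
    (hg : ∀ i, t (g i) = s (g (i + 1))) :
    ∃ m, 0 < m ∧ ∃ g' : ZMod m → E, Set.range g' ⊆ Set.range g ∧
      (∀ i, t (g' i) = s (g' (i + 1))) ∧ Function.Injective (s ∘ g') := by
  induction n using Nat.strong_induction_on with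
  | _ n ih =>
  by_cases hinj : Function.Injective (s ∘ g)
  · exact ⟨n, hn, g, subset_rfl, hg, hinj⟩
  have : NeZero n := .of_pos hn
  obtain ⟨i, j, hij, hne⟩ : ∃ i j, s (g i) = s (g j) ∧ i ≠ j := by
    simpa [Function.Injective] using hinj
  -- `g i, …, g (j - 1)` is again a closed walk, as `s (g i) = s (g j)`, and it is shorter.
  set m := (j - i).val
  have hm : NeZero m := ⟨(ZMod.val_ne_zero _).2 (sub_ne_zero.2 hne.symm)⟩
  have hclosed : ∀ k : ZMod m, t (g (i + k.val)) = s (g (i + (k + 1).val)) := fun k => by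
    rw [hg]
    rcases zmod_val_add_one_cases k with h | ⟨hk, h⟩
    · rw [h, Nat.cast_succ, add_assoc]
    · have hj : i + (k.val : ZMod n) + 1 = j := by
        rw [add_assoc, ← Nat.cast_add_one, hk, ZMod.natCast_zmod_val, add_sub_cancel]
      rw [hj, h, Nat.cast_zero, add_zero, hij]
  obtain ⟨m', hm', g', hsub, hg', hinj'⟩ := ih m (ZMod.val_lt _) hm.pos _ hclosed
  exact ⟨m', hm', g', hsub.trans (Set.range_comp_subset_range _ g), hg', hinj'⟩

lemma exists_isDirCycle_of_transGen {s t : E → V} {σ : Finset E} {a : E}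
    (h : TransGen (WalkRel s t σ) a a) : ∃ n ρ, ρ ⊆ σ ∧ IsDirCycle s t n ρ := by
  classical
  obtain ⟨n, hn, g, hg⟩ := exists_zmod_chain_of_transGen_self h
  obtain ⟨m, hm, g', hsub, hg', hinj⟩ :=
    exists_closedWalk_sources_injective n hn g fun i => (hg i).2.2
  have hσ : ∀ i, g' i ∈ σ := fun i => by
    obtain ⟨j, hj⟩ := hsub ⟨i, rfl⟩
    exact hj ▸ (hg j).1
  refine ⟨m, σ.filter (· ∈ Set.range g'), Finset.filter_subset _ _,
    hm, g', hinj.of_comp, fun f => ?_, hinj, hg'⟩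
  simp only [Finset.mem_filter, Set.mem_range]
  exact ⟨And.right, fun ⟨i, hi⟩ => ⟨hi ▸ hσ i, i, hi⟩⟩

lemma noDirCycleIn_iff (s t : E → V) (σ : Finset E) :
    NoDirCycleIn s t σ ↔ ∀ a, ¬ TransGen (WalkRel s t σ) a a := by
  constructor
  · intro h a ha
    obtain ⟨n, ρ, hρ, hc⟩ := exists_isDirCycle_of_transGen ha
    exact h n ρ hρ hc
  · rintro h n ρ hρ ⟨hn, g, -, hmem, -, hstep⟩
    have := NeZero.of_pos hn
    exact h (g 0) (transGen_self_of_forall_zmod fun i =>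
      ⟨hρ ((hmem _).2 ⟨i, rfl⟩), hρ ((hmem _).2 ⟨_, rfl⟩), hstep i⟩)

lemma mem_DT_iff {s t : E → V} {σ : Finset E} :
    σ ∈ DT s t ↔ (∀ e ∈ σ, ∀ f ∈ σ, e ≠ f → t e ≠ t f) ∧
      ∀ a, ¬ TransGen (WalkRel s t σ) a a :=
  Iff.and Iff.rfl (noDirCycleIn_iff s t σ)

lemma mem_DT_of_subset {s t : E → V} {σ τ : Finset E} (h : σ ∈ DT s t) (hτ : τ ⊆ σ) :
    τ ∈ DT s t :=
  ⟨fun x hx y hy => h.1 x (hτ hx) y (hτ hy), fun n ρ hρ => h.2 n ρ (hρ.trans hτ)⟩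

lemma image_mem_DT_iff [DecidableEq E] {E' : Type} {s t : E → V} {φ : E' → E}
    (hφ : Function.Injective φ) (τ' : Finset E') :
    τ'.image φ ∈ DT s t ↔ τ' ∈ DT (s ∘ φ) (t ∘ φ) := by
  have hwalk : WalkRel (s ∘ φ) (t ∘ φ) τ' = Function.onFun (WalkRel s t (τ'.image φ)) φ := by
    funext x y
    simp [WalkRel, Function.onFun, hφ.mem_finset_image]
  rw [mem_DT_iff, mem_DT_iff, hwalk]
  refine Iff.and ?_ ?_
  · simp [hφ.ne_iff]
  · simp only [← not_exists]
    refine not_congr (exists_transGen_onFun_self_iff fun a _ h => ?_).symm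
    obtain ⟨x, -, rfl⟩ := Finset.mem_image.mp h.1
    exact ⟨x, rfl⟩

lemma exists_image_val_mem_DT_iff [DecidableEq E] {p : E → Prop} (s t : E → V) (τ : Finset E) :
    (∃ τ' : Finset {f : E // p f}, τ = τ'.image Subtype.val ∧
      τ' ∈ DT (fun f => s f.val) (fun f => t f.val)) ↔ (∀ f ∈ τ, p f) ∧ τ ∈ DT s t := by
  classical
  constructor
  · rintro ⟨τ', rfl, h⟩
    refine ⟨?_, (image_mem_DT_iff Subtype.val_injective τ').2 h⟩
    simp only [Finset.mem_image]
    rintro _ ⟨f, -, rfl⟩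
    exact f.2
  · rintro ⟨hp, h⟩
    have hτ : (τ.subtype p).image Subtype.val = τ := by
      simpa [Finset.map_eq_image] using Finset.subtype_map_of_mem hp
    exact ⟨τ.subtype p, hτ.symm, (image_mem_DT_iff Subtype.val_injective _).1 (by rwa [hτ])⟩

lemma source_ne_target_of_singleton_mem_DT {s t : E → V} {e : E} (h : {e} ∈ DT s t) :
    s e ≠ t e := fun hst =>
  (mem_DT_iff.1 h).2 e
    (.single ⟨Finset.mem_singleton_self e, Finset.mem_singleton_self e, hst.symm⟩)

section Contraction

variable [DecidableEq V] [DecidableEq E] {s t : E → V} {e : E} {τ : Finset E}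

lemma walkRel_contract_eq_bypass (he : e ∉ τ) (ht : ∀ f ∈ τ, t f ≠ t e) :
    WalkRel (fun f => if s f = t e then s e else s f) (fun f => if t f = t e then s e else t f) τ =
      bypass (WalkRel s t (insert e τ)) e := by
  funext x y
  simp only [WalkRel, bypass, Finset.mem_insert]
  grind

lemma insert_mem_DT_iff (hst : s e ≠ t e) (he : e ∉ τ) (ht : ∀ f ∈ τ, t f ≠ t e) :
    insert e τ ∈ DT s t ↔
      τ ∈ DT (fun f => if s f = t e then s e else s f)
        (fun f => if t f = t e then s e else t f) := by
  rw [mem_DT_iff, mem_DT_iff, walkRel_contract_eq_bypass he ht]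
  refine Iff.and ?_ ?_
  · simp only [Finset.mem_insert, forall_eq_or_imp]
    grind
  · simp only [← not_exists]
    exact not_congr (exists_transGen_bypass_self_iff fun h => hst h.2.2.symm).symm

lemma mem_linkC_DT_iff (hst : s e ≠ t e) :
    τ ∈ linkC (DT s t) e ↔ (∀ f ∈ τ, t f ≠ t e ∧ ¬ SameEnds s t f e) ∧
      τ ∈ DT (fun f => if s f = t e then s e else s f)
        (fun f => if t f = t e then s e else t f) := by
  constructor
  · rintro ⟨-, he, hins⟩
    have ht : ∀ f ∈ τ, t f ≠ t e := fun f hf =>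
      hins.1 f (Finset.mem_insert_of_mem hf) e (Finset.mem_insert_self e τ)
        (ne_of_mem_of_not_mem hf he)
    refine ⟨fun f hf => ⟨ht f hf, ?_⟩, (insert_mem_DT_iff hst he ht).1 hins⟩
    rintro (⟨-, htf⟩ | ⟨hsf, htf⟩)
    · exact ht f hf htf
    · have hfe : f ∈ insert e τ := Finset.mem_insert_of_mem hf
      have hee := Finset.mem_insert_self e τ
      exact (mem_DT_iff.1 hins).2 e (.tail (.single ⟨hee, hfe, hsf.symm⟩) ⟨hfe, hee, htf⟩)
  · rintro ⟨hP, hτ⟩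
    have ht : ∀ f ∈ τ, t f ≠ t e := fun f hf => (hP f hf).1
    have he : e ∉ τ := fun h => ht e h rfl
    have hins := (insert_mem_DT_iff hst he ht).2 hτ
    exact ⟨mem_DT_of_subset hins (Finset.subset_insert e τ), he, hins⟩

end Contraction

/-- The link of an edge `e` (a vertex of `DT(D)`) in the directed tree
complex equals the directed tree complex of the multidigraph obtained by deleting all
edges with target `t e` and all edges with unordered endpoint pair `{s e, t e}` and then
identifying `s e` with `t e`; and the deletion of `e` in `DT(D)` equals `DT(D − e)`. -/
theorem statement_4 {V E : Type} [DecidableEq V] [DecidableEq E]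
    (s t : E → V) (e : E) (he : ({e} : Finset E) ∈ DT s t) :
    linkC (DT s t) e =
      {τ : Finset E |
        ∃ τ' : Finset {f : E // t f ≠ t e ∧ ¬ SameEnds s t f e},
          τ = τ'.image Subtype.val ∧
          τ' ∈ DT (fun f => if s f.val = t e then s e else s f.val)
                  (fun f => if t f.val = t e then s e else t f.val)} ∧
    delC (DT s t) e =
      {τ : Finset E | ∃ τ' : Finset {f : E // f ≠ e},
        τ = τ'.image Subtype.val ∧
        τ' ∈ DT (fun f => s f.val) (fun f => t f.val)} := by
  have hst := source_ne_target_of_singleton_mem_DT he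
  refine ⟨Set.ext fun τ => ?_, Set.ext fun τ => ?_⟩
  · exact (mem_linkC_DT_iff hst).trans (exists_image_val_mem_DT_iff _ _ τ).symm
  · refine Iff.trans ?_ (exists_image_val_mem_DT_iff s t τ).symm
    simp [delC, and_comm]

end ArXiv
end

section
/- If D is a directed cycle on n vertices, then the directed linear forest complex Dlf(D) and the directed tree complex DT(D) coincide, and this complex is exactly the boundary of the (n−1)-simplex on the edge set E(D); in particular it is vertex decomposable. -/
namespace ArXiv

/-!
The source and target maps of a directed cycle are injective, so the degree conditions in
`Dlf` and `DT` hold for every edge set and both complexes consist of the edge sets containing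
no directed cycle. A directed cycle inside `D` contains, with each edge, the next edge of `D`,
so it is all of `E`. Hence the faces are the proper subsets of `E`, and the boundary of a
simplex is vertex decomposable: deleting a vertex leaves a simplex, its link is again a
boundary of a simplex.
-/

open Finset Function

section Boundary

variable {α : Type} [DecidableEq α] {U : Finset α} {v : α}

lemma delC_ssubsets (hv : v ∈ U) : delC {τ | τ ⊂ U} v = {τ | τ ⊆ U.erase v} := by
  ext τ
  refine ⟨fun ⟨hτU, hvτ⟩ => subset_erase.2 ⟨hτU.subset, hvτ⟩, fun hτ => ⟨?_, ?_⟩⟩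
  · exact hτ.trans_ssubset (erase_ssubset hv)
  · exact fun hvτ => notMem_erase v U (hτ hvτ)

lemma linkC_ssubsets (hv : v ∈ U) : linkC {τ | τ ⊂ U} v = {τ | τ ⊂ U.erase v} := by
  ext τ
  simp only [linkC, Set.mem_ofPred_eq]
  grind

lemma sheddingVertex_ssubsets (hv : v ∈ U) : SheddingVertex {τ | τ ⊂ U} v := by
  rintro σ ⟨hσ, hmax⟩
  rw [delC_ssubsets hv] at hσ hmax
  obtain rfl : σ = U.erase v := hmax _ (Subset.refl _) hσ
  refine ⟨erase_ssubset hv, fun τ (hτ : τ ⊂ U) hsub => eq_of_subset_of_card_le hsub ?_⟩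
  have := card_lt_card hτ
  have := card_erase_add_one hv
  omega

theorem vertexDecomposable_ssubsets (U : Finset α) : VertexDecomposable {τ | τ ⊂ U} := by
  induction U using Finset.strongInduction with
  | H U ih =>
    obtain rfl | ⟨v, hv⟩ := U.eq_empty_or_nonempty
    · simpa only [not_ssubset_empty, Set.ofPred_false] using VertexDecomposable.void
    · refine .shed _ v ?_ ?_ (sheddingVertex_ssubsets hv)
      · rw [linkC_ssubsets hv]
        exact ih _ (erase_ssubset hv)
      · rw [delC_ssubsets hv]
        exact .simplex _

end Boundary

theorem ZMod.forall_of_add_one {n : ℕ} [NeZero n] {P : ZMod n → Prop} (a : ZMod n) (ha : P a)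
    (hsucc : ∀ j, P j → P (j + 1)) (j : ZMod n) : P j := by
  have hreach : ∀ k : ℕ, P (a + k) := by
    intro k
    induction k with
    | zero => simpa using ha
    | succ k ih => simpa [add_assoc] using hsucc _ ih
  simpa using hreach (j - a).val

section DirectedCycle

variable {V E : Type} {s t : E → V} {n : ℕ}

lemma target_injective (g : ZMod n ≃ E) (hcyc : ∀ i, t (g i) = s (g (i + 1)))
    (hinj : Injective fun i => s (g i)) : Injective t :=
  (g.injective_comp t).1 (by simpa only [comp_def, hcyc] using hinj.comp (add_left_injective 1))

lemma isDirCycle_univ [Fintype E] [NeZero n] (g : ZMod n ≃ E)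
    (hcyc : ∀ i, t (g i) = s (g (i + 1))) (hinj : Injective fun i => s (g i)) :
    IsDirCycle s t n univ :=
  ⟨Nat.pos_of_neZero n, g, g.injective, fun e => iff_of_true (mem_univ e) (g.surjective e),
    hinj, hcyc⟩

lemma IsDirCycle.eq_univ [Fintype E] [NeZero n] (g : ZMod n ≃ E)
    (hcyc : ∀ i, t (g i) = s (g (i + 1))) (hs : Injective s) {m : ℕ} {τ : Finset E}
    (hτ : IsDirCycle s t m τ) : τ = univ := by
  obtain ⟨-, h, -, hmem, -, hstep⟩ := hτ
  have hsucc : ∀ j, g j ∈ τ → g (j + 1) ∈ τ := by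
    intro j hj
    obtain ⟨i, hi⟩ := (hmem _).1 hj
    exact (hmem _).2 ⟨i + 1, hs (by rw [← hstep, hi, hcyc])⟩
  refine eq_univ_of_forall fun e => ?_
  simpa using ZMod.forall_of_add_one (P := fun j => g j ∈ τ) (g.symm (h 0))
    (by simpa using (hmem _).2 ⟨0, rfl⟩) hsucc (g.symm e)

lemma noDirCycleIn_iff_ne_univ [Fintype E] [NeZero n] (g : ZMod n ≃ E)
    (hcyc : ∀ i, t (g i) = s (g (i + 1))) (hinj : Injective fun i => s (g i)) {σ : Finset E} :
    NoDirCycleIn s t σ ↔ σ ≠ univ := by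
  refine ⟨fun h hσ => h n univ hσ.superset (isDirCycle_univ g hcyc hinj),
    fun hσ m τ hτσ hτ => hσ (univ_subset_iff.1 ?_)⟩
  rwa [← hτ.eq_univ g hcyc ((g.injective_comp s).1 hinj)]

end DirectedCycle

theorem statement_5_general {V E : Type} [DecidableEq E] [Fintype E]
    (s t : E → V) (n : ℕ) [NeZero n] (g : ZMod n ≃ E)
    (hcyc : ∀ i, t (g i) = s (g (i + 1)))
    (hinj : Function.Injective fun i => s (g i)) :
    Dlf s t = DT s t ∧
    Dlf s t = {σ : Finset E | σ ≠ Finset.univ} ∧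
    VertexDecomposable (Dlf s t) := by
  have hs : Injective s := (g.injective_comp s).1 hinj
  have ht : Injective t := target_injective g hcyc hinj
  have hacyc : ∀ σ : Finset E, NoDirCycleIn s t σ ↔ σ ≠ univ := fun _ =>
    noDirCycleIn_iff_ne_univ g hcyc hinj
  have hDlf : Dlf s t = {σ | σ ≠ univ} := by
    ext σ
    simp [Dlf, IsLinearForest, hs.ne_iff, ht.ne_iff, hacyc]
  have hDT : DT s t = {σ | σ ≠ univ} := by
    ext σ
    simp [DT, IsDirForest, ht.ne_iff, hacyc]
  refine ⟨hDlf.trans hDT.symm, hDlf, ?_⟩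
  simpa only [hDlf, ssubset_univ_iff] using vertexDecomposable_ssubsets (univ : Finset E)

/-- If `D` is a directed cycle on `n` vertices, then `Dlf(D) = DT(D)`,
this complex is the boundary of the `(n−1)`-simplex on the edge set `E(D)`, and it is
vertex decomposable. -/
theorem statement_5 {V E : Type} [DecidableEq E] [Fintype E]
    (s t : E → V) (n : ℕ) [NeZero n] (g : ZMod n ≃ E)
    (hcyc : ∀ i, t (g i) = s (g (i + 1)))
    (hinj : Function.Injective fun i => s (g i))
    (hsurj : Function.Surjective fun i => s (g i)) :
    Dlf s t = DT s t ∧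
    Dlf s t = {σ : Finset E | σ ≠ Finset.univ} ∧
    VertexDecomposable (Dlf s t) :=
  statement_5_general s t n g hcyc hinj

end ArXiv
end

section
/- Let D be a simple digraph (no parallel edges and no 2-cycles) whose linear-forest conflict graph G^lf_D is isomorphic to a cycle C_n with n ≥ 5. Then along the cycle, consecutive edges must alternately share a common source and a common target (forming an alternating closed trail), and hence n must be even. -/
/-!
In a simple digraph, two distinct edges conflict in `G^lf_D` exactly when they share a
source or a target. Along the cycle, each edge therefore shares its source or its target with
the next one, never both (no parallel edges), and edges two steps apart share neither.
So if `eᵢ, eᵢ₊₁` share a source, `eᵢ₊₁, eᵢ₊₂` cannot (else `eᵢ, eᵢ₊₂` would) and must share a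
target, and symmetrically. The kind of shared endpoint thus flips at every step, which
around a cycle of length `n` forces `n` to be even.
-/

namespace ArXiv

theorem ZMod.natCast_ne_zero_of_lt {n k : ℕ} (hk : 0 < k) (hkn : k < n) :
    (k : ZMod n) ≠ 0 := by
  rw [Ne, ZMod.natCast_eq_zero_iff]
  exact fun hdvd => absurd (Nat.le_of_dvd hk hdvd) (by omega)

theorem ZMod.even_of_forall_succ_iff_not {n : ℕ} (b : ZMod n → Prop)
    (hflip : ∀ i, b (i + 1) ↔ ¬ b i) : Even n := by
  have hparity : ∀ k : ℕ, b k ↔ (Even k ↔ b 0) := by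
    intro k
    induction k with
    | zero => simp
    | succ k ih =>
      rw [Nat.cast_succ, hflip, ih, Nat.even_add_one]
      tauto
  have := hparity n
  rw [ZMod.natCast_self] at this
  tauto

theorem lfAdj_iff_of_simple {V E : Type} {s t : E → V}
    (hnopar : ∀ e f : E, e ≠ f → ¬ (s e = s f ∧ t e = t f))
    (hno2cyc : ∀ e f : E, e ≠ f → ¬ (s e = t f ∧ t e = s f)) {e f : E} :
    LFAdj s t e f ↔ e ≠ f ∧ (s e = s f ∨ t e = t f) := by
  constructor
  · rintro ⟨hef, hsrc | htgt | hpar | hrev⟩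
    · exact ⟨hef, .inl hsrc⟩
    · exact ⟨hef, .inr htgt⟩
    · exact absurd hpar (hnopar e f hef)
    · exact absurd hrev (hno2cyc e f hef)
  · rintro ⟨hef, hsrc | htgt⟩
    · exact ⟨hef, .inl hsrc⟩
    · exact ⟨hef, .inr (.inl htgt)⟩

section CyclicEdgeSequence

variable {V E : Type} {s t : E → V} {n : ℕ} {g : ZMod n → E}

theorem target_succ_eq_of_source_eq
    (hstep : ∀ i, s (g i) = s (g (i + 1)) ∨ t (g i) = t (g (i + 1)))
    (hfar : ∀ i, s (g i) ≠ s (g (i + 2)) ∧ t (g i) ≠ t (g (i + 2)))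
    {i : ZMod n} (hsrc : s (g i) = s (g (i + 1))) : t (g (i + 1)) = t (g (i + 2)) := by
  have hnext := hstep (i + 1)
  rw [add_assoc, one_add_one_eq_two] at hnext
  exact hnext.resolve_left fun hsrc' => (hfar i).1 (hsrc.trans hsrc')

theorem source_succ_eq_of_target_eq
    (hstep : ∀ i, s (g i) = s (g (i + 1)) ∨ t (g i) = t (g (i + 1)))
    (hfar : ∀ i, s (g i) ≠ s (g (i + 2)) ∧ t (g i) ≠ t (g (i + 2)))
    {i : ZMod n} (htgt : t (g i) = t (g (i + 1))) : s (g (i + 1)) = s (g (i + 2)) := by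
  have hnext := hstep (i + 1)
  rw [add_assoc, one_add_one_eq_two] at hnext
  exact hnext.resolve_right fun htgt' => (hfar i).2 (htgt.trans htgt')

theorem source_succ_eq_iff_not_source_eq
    (hstep : ∀ i, s (g i) = s (g (i + 1)) ∨ t (g i) = t (g (i + 1)))
    (hfar : ∀ i, s (g i) ≠ s (g (i + 2)) ∧ t (g i) ≠ t (g (i + 2)))
    (hexcl : ∀ i, ¬ (s (g i) = s (g (i + 1)) ∧ t (g i) = t (g (i + 1)))) (i : ZMod n) :
    s (g (i + 1)) = s (g (i + 1 + 1)) ↔ ¬ s (g i) = s (g (i + 1)) := by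
  constructor
  · intro hsrc' hsrc
    have htgt' := target_succ_eq_of_source_eq hstep hfar hsrc
    rw [← one_add_one_eq_two, ← add_assoc] at htgt'
    exact hexcl (i + 1) ⟨hsrc', htgt'⟩
  · intro hsrc
    rw [add_assoc, one_add_one_eq_two]
    exact source_succ_eq_of_target_eq hstep hfar ((hstep i).resolve_left hsrc)

end CyclicEdgeSequence

/-- If `D` is a simple digraph (no parallel edges, no 2-cycles) whose
linear-forest conflict graph is isomorphic to the cycle `Cₙ` with `n ≥ 5`, then the
consecutive edges alternately share a common source and a common target, and `n` is
even. -/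
theorem statement_8 {V E : Type} (s t : E → V)
    (hnopar : ∀ e f : E, e ≠ f → ¬ (s e = s f ∧ t e = t f))
    (hno2cyc : ∀ e f : E, e ≠ f → ¬ (s e = t f ∧ t e = s f))
    (n : ℕ) (hn : 5 ≤ n) (g : ZMod n ≃ E)
    (hadj : ∀ i j : ZMod n, i ≠ j →
      (LFAdj s t (g i) (g j) ↔ j = i + 1 ∨ i = j + 1)) :
    (∀ i : ZMod n,
      (s (g i) = s (g (i + 1)) → t (g (i + 1)) = t (g (i + 2))) ∧
      (t (g i) = t (g (i + 1)) → s (g (i + 1)) = s (g (i + 2)))) ∧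
    Even n := by
  have h1 : (1 : ZMod n) ≠ 0 := by exact_mod_cast ZMod.natCast_ne_zero_of_lt one_pos (by omega)
  have h2 : (2 : ZMod n) ≠ 0 := by exact_mod_cast ZMod.natCast_ne_zero_of_lt two_pos (by omega)
  have h3 : (3 : ZMod n) ≠ 0 := by exact_mod_cast ZMod.natCast_ne_zero_of_lt three_pos (by omega)
  have hadj' (i j : ZMod n) (hij : i ≠ j) :
      (s (g i) = s (g j) ∨ t (g i) = t (g j)) ↔ j = i + 1 ∨ i = j + 1 := by
    rw [← hadj i j hij, lfAdj_iff_of_simple hnopar hno2cyc, and_iff_right (g.injective.ne hij)]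
  have hne1 (i : ZMod n) : i ≠ i + 1 := fun h => h1 (by linear_combination -h)
  have hstep (i : ZMod n) : s (g i) = s (g (i + 1)) ∨ t (g i) = t (g (i + 1)) :=
    (hadj' i _ (hne1 i)).2 (.inl rfl)
  have hfar (i : ZMod n) : s (g i) ≠ s (g (i + 2)) ∧ t (g i) ≠ t (g (i + 2)) := by
    rw [← not_or, hadj' i _ fun h => h2 (by linear_combination -h)]
    rintro (h | h)
    exacts [h1 (by linear_combination h), h3 (by linear_combination -h)]
  have hexcl (i : ZMod n) : ¬ (s (g i) = s (g (i + 1)) ∧ t (g i) = t (g (i + 1))) :=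
    hnopar _ _ (g.injective.ne (hne1 i))
  exact ⟨fun _ => ⟨target_succ_eq_of_source_eq hstep hfar,
      source_succ_eq_of_target_eq hstep hfar⟩,
    ZMod.even_of_forall_succ_iff_not (fun i => s (g i) = s (g (i + 1)))
      (source_succ_eq_iff_not_source_eq hstep hfar hexcl)⟩

end ArXiv
end

section
/- For n ≥ 2, let L_n be the double directed string on vertex set {1,…,n+1} with edges e_i from i to i+1 and e_i' from i+1 to i for each 1 ≤ i ≤ n. Then {e_1,…,e_n} and {e_1',…,e_n'} are the only faces of Dlf(L_n) of cardinality n, and the pure (n−1)-skeleton of Dlf(L_n) is disconnected; hence Dlf(L_n) is not sequentially Cohen-Macaulay and not shellable. -/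
namespace ArXiv

/-!
In `Lₙ` the edges `eᵢ, eᵢ'` form a directed 2-cycle, `eᵢ, eᵢ₊₁'` share a head and
`eᵢ', eᵢ₊₁` share a tail. So a face of `Dlf(Lₙ)` uses each index `i` at most once, and a face
with `n` edges uses every index, with the same orientation at consecutive indices: it is
`{e₁, …, eₙ}` or `{e₁', …, eₙ'}`. The pure `(n-1)`-skeleton is therefore the disjoint union of
these two simplices. Being disconnected, it has nonzero reduced `H₀`, which its Cohen–Macaulay
property forbids as soon as it has an edge (`n ≥ 2`). In a shelling, whichever of the two facets
comes later would have to meet an earlier facet in a ridge; but any face through a ridge of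
either facet has `n` edges and so is that facet itself.
-/

section Digraph

variable {V E : Type} {s t : E → V}

theorem isDirCycle_pair [DecidableEq E] {e f : E} (hloop : s e ≠ t e) (hef : t e = s f)
    (hfe : t f = s e) : IsDirCycle s t 2 {e, f} := by
  have hne : e ≠ f := by rintro rfl; exact hloop hfe.symm
  refine ⟨two_pos, ![e, f], ?_, ?_, ?_, ?_⟩
  · intro i j; fin_cases i <;> fin_cases j <;> simp [hne, hne.symm] <;> rfl
  · intro x
    simp only [Finset.mem_insert, Finset.mem_singleton]
    refine ⟨by rintro (rfl | rfl); exacts [⟨0, rfl⟩, ⟨1, rfl⟩], fun ⟨i, hi⟩ => ?_⟩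
    fin_cases i <;> simp [← hi]
  · intro i j; fin_cases i <;> fin_cases j <;> simp [← hef, hloop, hloop.symm] <;> rfl
  · intro i; fin_cases i
    · exact hef
    · exact hfe

theorem not_isDirCycle_of_lt {β : Type} [Preorder β] (φ : V → β) {m : ℕ} {τ : Finset E}
    (hφ : ∀ e ∈ τ, φ (s e) < φ (t e)) : ¬ IsDirCycle s t m τ := by
  rintro ⟨hm, g, -, hmem, -, hnext⟩
  have hstep (i : ZMod m) : φ (s (g i)) < φ (s (g (i + 1))) :=
    hnext i ▸ hφ _ ((hmem _).2 ⟨i, rfl⟩)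
  have hgrow (k : ℕ) : φ (s (g 0)) < φ (s (g ((k : ZMod m) + 1))) := by
    induction k with
    | zero => simpa using hstep 0
    | succ k ih => exact ih.trans (by rw [Nat.cast_succ]; exact hstep _)
  have hwrap : ((m - 1 : ℕ) : ZMod m) + 1 = 0 := by
    rw [← Nat.cast_add_one, Nat.sub_add_cancel hm, ZMod.natCast_self]
  exact lt_irrefl _ (hwrap ▸ hgrow (m - 1))

theorem mem_Dlf_of_injOn_of_lt {β : Type} [Preorder β] {σ : Finset E}
    (hs : Set.InjOn s σ) (ht : Set.InjOn t σ) (φ : V → β)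
    (hφ : ∀ e ∈ σ, φ (s e) < φ (t e)) : σ ∈ Dlf s t :=
  ⟨fun _ he _ hf hne h => hne (hs he hf h), fun _ he _ hf hne h => hne (ht he hf h),
    fun _ _ hτ => not_isDirCycle_of_lt φ fun e he => hφ e (hτ he)⟩

theorem IsLinearForest.not_antiparallel [DecidableEq E] {σ : Finset E}
    (hσ : IsLinearForest s t σ) {e f : E} (he : e ∈ σ) (hf : f ∈ σ) (hloop : s e ≠ t e)
    (hef : t e = s f) (hfe : t f = s e) : False :=
  hσ.2.2 2 {e, f} (Finset.insert_subset he (Finset.singleton_subset_iff.2 hf))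
    (isDirCycle_pair hloop hef hfe)

end Digraph

section Complex

variable {α : Type}

def ConstOnFaces {β : Type} (Δ : Set (Finset α)) (c : α → β) : Prop :=
  ∀ τ ∈ Δ, ∀ x ∈ τ, ∀ y ∈ τ, c x = c y

theorem not_complexConnected_of_constOnFaces [DecidableEq α] {β : Type} {Δ : Set (Finset α)}
    {c : α → β} (hc : ConstOnFaces Δ c) {a b : α} (ha : {a} ∈ Δ) (hb : {b} ∈ Δ)
    (hab : c a ≠ c b) : ¬ ComplexConnected Δ := by
  intro hconn
  refine hab (Relation.ReflTransGen.head_induction_on (hconn a b ha hb) rfl ?_)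
  intro x y hxy _ hy
  exact (hc _ hxy x (by simp) y (by simp)).trans hy

theorem sum_mul_bdry_fin_two [Fintype α] {K : Type} [Field K] (φ : α → K)
    (b : (Fin 2 → α) → K) :
    ∑ g : Fin 1 → α, φ (g 0) * bdry b g = ∑ v, ∑ u, b ![v, u] * (φ u - φ v) := by
  have hbdry (u : α) : bdry b (fun _ => u) = ∑ v, b ![v, u] - ∑ v, b ![u, v] := by
    have h0 (v : α) : Fin.insertNth 0 v (fun _ : Fin 1 => u) = ![v, u] := by
      ext i; fin_cases i <;> rfl
    have h1 (v : α) : Fin.insertNth 1 v (fun _ : Fin 1 => u) = ![u, v] := by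
      ext i; fin_cases i <;> rfl
    change ∑ j : Fin 2, (-1 : K) ^ (j : ℕ) * ∑ v, b (Fin.insertNth j v fun _ => u) = _
    simp only [Fin.sum_univ_two, h0, h1, Fin.val_zero, Fin.val_one, pow_zero, pow_one]
    ring
  calc ∑ g : Fin 1 → α, φ (g 0) * bdry b g
      = ∑ u, φ u * bdry b (fun _ => u) :=
        Fintype.sum_equiv (Equiv.funUnique (Fin 1) α) _ _ fun g => by
          rw [show g = fun _ => g 0 from funext fun i => congrArg g (Subsingleton.elim i 0)]
          rfl
    _ = ∑ v, ∑ u, b ![v, u] * (φ u - φ v) := by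
        simp only [hbdry, mul_sub, Finset.mul_sum, Finset.sum_sub_distrib]
        rw [Finset.sum_comm (f := fun u v => φ u * b ![v, u])]
        simp only [mul_comm]

theorem not_rHomZero_zero_of_constOnFaces [Fintype α] [DecidableEq α] {β K : Type} [Field K]
    {Δ : Set (Finset α)} {c : α → β} (hc : ConstOnFaces Δ c) {a b : α} (ha : {a} ∈ Δ)
    (hb : {b} ∈ Δ) (hab : c a ≠ c b) : ¬ RHomZero α K Δ 0 := by
  classical
  intro hH
  let z : (Fin 1 → α) → K := fun g => (if g 0 = a then 1 else 0) - (if g 0 = b then 1 else 0)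
  -- The indicator of the colour of `a` pairs every 1-boundary to `0` but `[a] - [b]` to `1`.
  let φ : α → K := fun u => if c u = c a then 1 else 0
  have hsum (f : α → K) : ∑ g : Fin 1 → α, f (g 0) = ∑ u, f u :=
    (Equiv.funUnique (Fin 1) α).sum_comp f
  have hz : validChain Δ z := by
    intro g hg
    have : g 0 = a ∨ g 0 = b := by by_contra! h; simp [z, h.1, h.2] at hg
    have himage : Finset.univ.image g = {g 0} := by simp [Finset.univ_unique]
    rcases this with h | h <;> rw [himage, h] <;> assumption
  have haug : ∑ g, z g = 0 := by
    simp only [z, hsum fun u => (if u = a then (1 : K) else 0) - (if u = b then 1 else 0)]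
    simp
  obtain ⟨w, hw, hwz⟩ := hH z hz haug
  have hzero : ∑ g : Fin 1 → α, φ (g 0) * bdry w g = 0 := by
    rw [sum_mul_bdry_fin_two]
    refine Finset.sum_eq_zero fun v _ => Finset.sum_eq_zero fun u _ => ?_
    by_cases hvu : w ![v, u] = 0
    · rw [hvu, zero_mul]
    · have hface := hw _ hvu
      have : c u = c v := hc _ hface u (by simp) v (by simp)
      simp [φ, this]
  have hone : ∑ g : Fin 1 → α, φ (g 0) * z g = 1 := by
    simp only [z, hsum fun u => φ u * ((if u = a then (1 : K) else 0) - (if u = b then 1 else 0))]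
    simp [φ, mul_sub, hab.symm]
  rw [hwz] at hzero
  exact one_ne_zero (hone.symm.trans hzero)

theorem IsCM.rHomZero_zero [Fintype α] [DecidableEq α] {K : Type} [Field K]
    {Δ : Set (Finset α)} (h : IsCM α K Δ) (hempty : ∅ ∈ Δ) {τ : Finset α}
    (hτ : τ ∈ Δ) (hcard : 2 ≤ τ.card) : RHomZero α K Δ 0 := by
  have hlink : linkFaceC Δ ∅ = Δ := by ext; simp [linkFaceC]
  simpa [hlink] using h ∅ hempty 0 ⟨τ, by rwa [hlink], hcard⟩

/-- A facet with this property can only come first in a shelling. -/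
def RidgeIsolated (Δ : Set (Finset α)) (σ : Finset α) : Prop :=
  ∀ ρ ⊆ σ, ρ.card + 1 = σ.card → ∀ τ ∈ Δ, ρ ⊆ τ → τ ⊆ σ

theorem not_shellable_of_ridgeIsolated {Δ : Set (Finset α)} {σ₁ σ₂ : Finset α}
    (h₁ : IsFacetOf Δ σ₁) (h₂ : IsFacetOf Δ σ₂) (hne : σ₁ ≠ σ₂)
    (hi₁ : RidgeIsolated Δ σ₁) (hi₂ : RidgeIsolated Δ σ₂) : ¬ Shellable Δ := by
  rintro ⟨m, F, hinj, hfacet, hshell⟩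
  have hzero (i : Fin m) (hi : RidgeIsolated Δ (F i)) : (i : ℕ) = 0 := by
    by_contra hpos
    obtain ⟨ρ, hρi, ⟨j, hji, hρj⟩, hcard, -⟩ := hshell i (Nat.pos_of_ne_zero hpos) ∅
      (Finset.empty_subset _) ⟨⟨0, by omega⟩, Fin.lt_def.2 (Nat.pos_of_ne_zero hpos),
        Finset.empty_subset _⟩
    have hFj := (hfacet (F j)).2 ⟨j, rfl⟩
    have hFi := (hfacet (F i)).2 ⟨i, rfl⟩
    exact hji.ne (hinj (hFj.2 _ hFi.1 (hi ρ hρi hcard _ hFj.1 hρj)))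
  obtain ⟨i₁, rfl⟩ := (hfacet σ₁).1 h₁
  obtain ⟨i₂, rfl⟩ := (hfacet σ₂).1 h₂
  exact hne (congrArg F (Fin.ext ((hzero i₁ hi₁).trans (hzero i₂ hi₂).symm)))

theorem isFacetOf_of_card_eq {Δ : Set (Finset α)} {n : ℕ} (hcard : ∀ τ ∈ Δ, τ.card ≤ n)
    {σ : Finset α} (hσ : σ ∈ Δ) (hσn : σ.card = n) : IsFacetOf Δ σ :=
  ⟨hσ, fun τ hτ hστ => Finset.eq_of_subset_of_card_le hστ (hσn ▸ hcard τ hτ)⟩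

theorem ridgeIsolated_of_card_eq [DecidableEq α] {Δ : Set (Finset α)} {n : ℕ} (hn : 2 ≤ n)
    (hcard : ∀ τ ∈ Δ, τ.card ≤ n) {σ₁ σ₂ : Finset α}
    (hmax : ∀ τ ∈ Δ, τ.card = n → τ = σ₁ ∨ τ = σ₂) (hdisj : Disjoint σ₁ σ₂)
    (hσ₁ : σ₁.card = n) : RidgeIsolated Δ σ₁ := by
  intro ρ hρ hρcard τ hτ hρτ x hx
  by_contra hxσ
  have hτn : τ.card = n := by
    refine le_antisymm (hcard τ hτ) ?_
    calc n = (insert x ρ).card := by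
          rw [Finset.card_insert_of_notMem fun h => hxσ (hρ h)]; omega
      _ ≤ τ.card := Finset.card_le_card (Finset.insert_subset hx hρτ)
  rcases hmax τ hτ hτn with rfl | rfl
  · exact hxσ hx
  · have hρ0 : ρ = ∅ := Finset.disjoint_self_iff_empty _ |>.1 (hdisj.mono hρ hρτ)
    rw [hρ0, Finset.card_empty] at hρcard
    omega

end Complex

theorem Fin.iff_of_iff_of_val_eq_succ {n : ℕ} {P : Fin n → Prop}
    (h : ∀ j k : Fin n, (k : ℕ) = j + 1 → (P j ↔ P k)) (i j : Fin n) : P i ↔ P j := by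
  cases n with
  | zero => exact i.elim0
  | succ n =>
    suffices hzero : ∀ i, P i ↔ P 0 from (hzero i).trans (hzero j).symm
    intro i
    induction i using Fin.induction with
    | zero => rfl
    | succ i ih => exact (h _ _ (by simp)).symm.trans ih

section DoubleString

variable {n : ℕ}

theorem inl_image_mem_Dlf : Finset.univ.image Sum.inl ∈ Dlf (sL n) (tL n) := by
  refine mem_Dlf_of_injOn_of_lt ?_ ?_ id ?_ <;> simp [Set.InjOn, sL, tL]

theorem inr_image_mem_Dlf : Finset.univ.image Sum.inr ∈ Dlf (sL n) (tL n) := by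
  refine mem_Dlf_of_injOn_of_lt ?_ ?_ OrderDual.toDual ?_ <;> simp [Set.InjOn, sL, tL]

theorem card_inl_image : (Finset.univ.image (Sum.inl : Fin n → Fin n ⊕ Fin n)).card = n := by
  simp [Finset.card_image_of_injective _ Sum.inl_injective]

theorem card_inr_image : (Finset.univ.image (Sum.inr : Fin n → Fin n ⊕ Fin n)).card = n := by
  simp [Finset.card_image_of_injective _ Sum.inr_injective]

theorem disjoint_inl_image_inr_image :
    Disjoint (Finset.univ.image (Sum.inl : Fin n → Fin n ⊕ Fin n))
      (Finset.univ.image Sum.inr) := by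
  simp [Finset.disjoint_left]

section Face

variable {σ : Finset (Fin n ⊕ Fin n)} (hσ : σ ∈ Dlf (sL n) (tL n))
include hσ

theorem not_inl_mem_and_inr_mem (i : Fin n) : ¬ (Sum.inl i ∈ σ ∧ Sum.inr i ∈ σ) := fun h =>
  IsLinearForest.not_antiparallel hσ h.1 h.2 (by simp [sL, tL, i.castSucc_lt_succ.ne]) rfl rfl

theorem not_inl_mem_and_inr_succ_mem {j k : Fin n} (hjk : (k : ℕ) = j + 1) :
    ¬ (Sum.inl j ∈ σ ∧ Sum.inr k ∈ σ) := fun h =>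
  hσ.2.1 _ h.1 _ h.2 (by simp) (by simp [tL, Fin.ext_iff, hjk])

theorem not_inr_mem_and_inl_succ_mem {j k : Fin n} (hjk : (k : ℕ) = j + 1) :
    ¬ (Sum.inr j ∈ σ ∧ Sum.inl k ∈ σ) := fun h =>
  hσ.1 _ h.1 _ h.2 (by simp) (by simp [sL, Fin.ext_iff, hjk])

theorem injOn_elim_id_id : Set.InjOn (Sum.elim id id) (σ : Set (Fin n ⊕ Fin n)) := by
  rintro (i | i) hi (j | j) hj (hij : i = j) <;> subst hij
  · rfl
  · exact (not_inl_mem_and_inr_mem hσ i ⟨hi, hj⟩).elim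
  · exact (not_inl_mem_and_inr_mem hσ i ⟨hj, hi⟩).elim
  · rfl

theorem card_le_of_mem_Dlf : σ.card ≤ n := by
  simpa using Finset.card_le_card_of_injOn _ (fun _ _ => Finset.mem_univ _) (injOn_elim_id_id hσ)

theorem inl_mem_or_inr_mem_of_card_eq (hcard : σ.card = n) (k : Fin n) :
    Sum.inl k ∈ σ ∨ Sum.inr k ∈ σ := by
  have himage : σ.image (Sum.elim id id) = Finset.univ := Finset.eq_univ_of_card _ <| by
    rw [Finset.card_image_of_injOn (injOn_elim_id_id hσ), hcard, Fintype.card_fin]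
  obtain ⟨i | i, hi, rfl⟩ := Finset.mem_image.1 (himage ▸ Finset.mem_univ k)
  exacts [Or.inl hi, Or.inr hi]

theorem eq_inl_image_or_eq_inr_image_of_card_eq (hcard : σ.card = n) :
    σ = Finset.univ.image Sum.inl ∨ σ = Finset.univ.image Sum.inr := by
  have hcover := inl_mem_or_inr_mem_of_card_eq hσ hcard
  have hstep (j k : Fin n) (hjk : (k : ℕ) = j + 1) : Sum.inl j ∈ σ ↔ Sum.inl k ∈ σ :=
    ⟨fun hj => (hcover k).resolve_right fun hk =>
        not_inl_mem_and_inr_succ_mem hσ hjk ⟨hj, hk⟩,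
      fun hk => (hcover j).resolve_right fun hj =>
        not_inr_mem_and_inl_succ_mem hσ hjk ⟨hj, hk⟩⟩
  have hsub_eq {S : Finset (Fin n ⊕ Fin n)} (hS : S.card = n) (hSσ : S ⊆ σ) : σ = S :=
    (Finset.eq_of_subset_of_card_le hSσ (by rw [hS, hcard])).symm
  by_cases hall : ∀ k, Sum.inl k ∈ σ
  · exact Or.inl (hsub_eq card_inl_image (Finset.image_subset_iff.2 fun k _ => hall k))
  · obtain ⟨i, hi⟩ := not_forall.1 hall
    refine Or.inr (hsub_eq card_inr_image (Finset.image_subset_iff.2 fun k _ => ?_))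
    exact (hcover k).resolve_left fun hk => hi ((Fin.iff_of_iff_of_val_eq_succ hstep i k).2 hk)

end Face

theorem mem_Dlf_and_card_eq_iff (σ : Finset (Fin n ⊕ Fin n)) :
    (σ ∈ Dlf (sL n) (tL n) ∧ σ.card = n) ↔
      (σ = Finset.univ.image Sum.inl ∨ σ = Finset.univ.image Sum.inr) := by
  refine ⟨fun ⟨hσ, hcard⟩ => eq_inl_image_or_eq_inr_image_of_card_eq hσ hcard, ?_⟩
  rintro (rfl | rfl)
  exacts [⟨inl_image_mem_Dlf, card_inl_image⟩, ⟨inr_image_mem_Dlf, card_inr_image⟩]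

theorem constOnFaces_pureSkel :
    ConstOnFaces (pureSkel (Dlf (sL n) (tL n)) (n - 1)) Sum.isLeft := by
  rintro τ ⟨σ, hσ, hcard, hτσ⟩ x hx y hy
  have hσn : σ.card = n := by have := card_le_of_mem_Dlf hσ; omega
  rcases eq_inl_image_or_eq_inr_image_of_card_eq hσ hσn with rfl | rfl
  all_goals
    obtain ⟨i, -, rfl⟩ := Finset.mem_image.1 (hτσ hx)
    obtain ⟨j, -, rfl⟩ := Finset.mem_image.1 (hτσ hy)
    rfl

theorem singleton_inl_mem_pureSkel (i : Fin n) :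
    ({Sum.inl i} : Finset (Fin n ⊕ Fin n)) ∈ pureSkel (Dlf (sL n) (tL n)) (n - 1) :=
  ⟨_, inl_image_mem_Dlf, by rw [card_inl_image]; have := i.pos; omega, by simp⟩

theorem singleton_inr_mem_pureSkel (i : Fin n) :
    ({Sum.inr i} : Finset (Fin n ⊕ Fin n)) ∈ pureSkel (Dlf (sL n) (tL n)) (n - 1) :=
  ⟨_, inr_image_mem_Dlf, by rw [card_inr_image]; have := i.pos; omega, by simp⟩

theorem not_complexConnected_pureSkel (hn : n ≠ 0) :
    ¬ ComplexConnected (pureSkel (Dlf (sL n) (tL n)) (n - 1)) :=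
  have i : Fin n := ⟨0, Nat.pos_of_ne_zero hn⟩
  not_complexConnected_of_constOnFaces constOnFaces_pureSkel (singleton_inl_mem_pureSkel i)
    (singleton_inr_mem_pureSkel i) (by simp)

theorem not_isSCM (hn : 2 ≤ n) (K : Type) [Field K] :
    ¬ IsSCM (Fin n ⊕ Fin n) K (Dlf (sL n) (tL n)) := by
  intro hSCM
  have i : Fin n := ⟨0, by omega⟩
  have hcard : (Finset.univ.image (Sum.inl : Fin n → Fin n ⊕ Fin n)).card = n - 1 + 1 := by
    rw [card_inl_image]; omega
  have hface : Finset.univ.image Sum.inl ∈ pureSkel (Dlf (sL n) (tL n)) (n - 1) :=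
    ⟨_, inl_image_mem_Dlf, hcard, subset_rfl⟩
  have hempty : ∅ ∈ pureSkel (Dlf (sL n) (tL n)) (n - 1) :=
    ⟨_, inl_image_mem_Dlf, hcard, Finset.empty_subset _⟩
  exact not_rHomZero_zero_of_constOnFaces constOnFaces_pureSkel (singleton_inl_mem_pureSkel i)
    (singleton_inr_mem_pureSkel i) (by simp)
    ((hSCM (n - 1)).rHomZero_zero hempty hface (by rwa [card_inl_image]))

theorem not_shellable_Dlf (hn : 2 ≤ n) : ¬ Shellable (Dlf (sL n) (tL n)) := by
  have hcard (τ) (hτ : τ ∈ Dlf (sL n) (tL n)) : τ.card ≤ n := card_le_of_mem_Dlf hτ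
  have hmax (τ) (hτ : τ ∈ Dlf (sL n) (tL n)) (hτn : τ.card = n) :=
    eq_inl_image_or_eq_inr_image_of_card_eq hτ hτn
  have hne :
      Finset.univ.image (Sum.inl : Fin n → Fin n ⊕ Fin n) ≠ Finset.univ.image Sum.inr :=
    disjoint_inl_image_inr_image.ne (Finset.card_pos.1 (by rw [card_inl_image]; omega)).ne_empty
  exact not_shellable_of_ridgeIsolated
    (isFacetOf_of_card_eq hcard inl_image_mem_Dlf card_inl_image)
    (isFacetOf_of_card_eq hcard inr_image_mem_Dlf card_inr_image) hne
    (ridgeIsolated_of_card_eq hn hcard hmax disjoint_inl_image_inr_image card_inl_image)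
    (ridgeIsolated_of_card_eq hn hcard (fun τ hτ hτn => (hmax τ hτ hτn).symm)
      disjoint_inl_image_inr_image.symm card_inr_image)

end DoubleString

/-- For `n ≥ 2`, the only faces of `Dlf(Lₙ)` of cardinality `n` are
`{e₁, …, eₙ}` and `{e₁', …, eₙ'}`; the pure `(n−1)`-skeleton of `Dlf(Lₙ)` is
disconnected; hence `Dlf(Lₙ)` is not sequentially Cohen–Macaulay (over any field)
and not shellable. -/
theorem statement_10 (n : ℕ) (hn : 2 ≤ n) :
    (∀ σ : Finset (Fin n ⊕ Fin n),
        (σ ∈ Dlf (sL n) (tL n) ∧ σ.card = n) ↔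
        (σ = Finset.univ.image Sum.inl ∨ σ = Finset.univ.image Sum.inr)) ∧
    ¬ ComplexConnected (pureSkel (Dlf (sL n) (tL n)) (n - 1)) ∧
    (∀ (K : Type) [Field K], ¬ IsSCM (Fin n ⊕ Fin n) K (Dlf (sL n) (tL n))) ∧
    ¬ Shellable (Dlf (sL n) (tL n)) :=
  ⟨mem_Dlf_and_card_eq_iff, not_complexConnected_pureSkel (by omega), not_isSCM hn,
    not_shellable_Dlf hn⟩

end ArXiv
end

section
/- If D is a 2-acyclic multidigraph, then the tree conflict graph G^t_D is chordal, i.e., has no induced cycle of length at least 4. -/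
namespace ArXiv

private lemma st13_natCast_ne_zero {n k : ℕ} (h1 : 0 < k) (h2 : k < n) :
    ((k : ℕ) : ZMod n) ≠ 0 := by
  haveI : NeZero n := ⟨by omega⟩
  intro hh
  have hv := congrArg ZMod.val hh
  rw [ZMod.val_cast_of_lt h2, ZMod.val_zero] at hv
  omega

/-- Main step: if the cycle strictly alternates (reversed pair at even positions,
common target at odd positions), we extract a directed cycle of length `m`
(for `m ≥ 3`), or a chord (for `m = 2`). -/
private lemma st13_main {V E : Type} (s t : E → V) (h : TwoAcyclic s t)
    (n m : ℕ) (hm : 2 ≤ m) (hn : n = 2 * m)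
    (g : ZMod n → E) (ginj : Function.Injective g)
    (hadj : ∀ i j : ZMod n, i ≠ j → (TAdj s t (g i) (g j) ↔ j = i + 1 ∨ i = j + 1))
    (hR : ∀ i : ZMod n, Even i.val → s (g i) = t (g (i + 1)) ∧ t (g i) = s (g (i + 1)))
    (hT : ∀ i : ZMod n, Odd i.val → t (g i) = t (g (i + 1))) : False := by
  haveI := Classical.decEq E
  haveI : NeZero n := ⟨by omega⟩
  haveI : NeZero m := ⟨by omega⟩
  haveI : Fact (1 < m) := ⟨by omega⟩
  have h1ne0 : (1 : ZMod n) ≠ 0 := by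
    have := st13_natCast_ne_zero (n := n) (k := 1) (by omega) (by omega)
    push_cast at this; exact this
  set ι : ZMod m → ZMod n := fun j => ((2 * j.val : ℕ) : ZMod n) with hιdef
  have hjlt : ∀ j : ZMod m, j.val < m := fun j => ZMod.val_lt j
  have hι_val : ∀ j, (ι j).val = 2 * j.val := by
    intro j; simp only [hιdef]
    exact ZMod.val_cast_of_lt (by have := hjlt j; omega)
  have hι1 : ∀ j, ι j + 1 = ((2 * j.val + 1 : ℕ) : ZMod n) := by
    intro j; simp only [hιdef]; push_cast; ring
  have hι1_val : ∀ j, (ι j + 1).val = 2 * j.val + 1 := by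
    intro j; rw [hι1 j]
    exact ZMod.val_cast_of_lt (by have := hjlt j; omega)
  have hι_inj : Function.Injective ι := by
    intro j j' hjj
    have hv := congrArg ZMod.val hjj
    rw [hι_val, hι_val] at hv
    have hv2 : j.val = j'.val := by omega
    calc j = ((j.val : ℕ) : ZMod m) := (ZMod.natCast_rightInverse j).symm
    _ = ((j'.val : ℕ) : ZMod m) := by rw [hv2]
    _ = j' := ZMod.natCast_rightInverse j'
  have hstep : ∀ j, ι (j + 1) = ι j + 2 := by
    intro j
    have h1 : ι j + 2 = ((2 * j.val + 2 : ℕ) : ZMod n) := by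
      simp only [hιdef]; push_cast; ring
    rw [h1]
    simp only [hιdef]
    rw [ZMod.natCast_eq_natCast_iff]
    have hval : (j + 1).val = (j.val + 1) % m := by
      rw [ZMod.val_add, ZMod.val_one]
    rw [hval, hn]
    have h2 : (2 : ℕ) * ((j.val + 1) % m) ≡ 2 * (j.val + 1) [MOD 2 * m] :=
      Nat.ModEq.mul_left' 2 (Nat.mod_modEq _ _)
    have h3 : 2 * (j.val + 1) = 2 * j.val + 2 := by ring
    rw [h3] at h2
    exact h2
  have hEven_ι : ∀ j, Even (ι j).val := by
    intro j; rw [hι_val]; exact ⟨j.val, by ring⟩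
  have hOdd_ι1 : ∀ j, Odd (ι j + 1).val := by
    intro j; rw [hι1_val]; exact ⟨j.val, by ring⟩
  set F : ZMod m → E := fun j => g (ι j + 1) with hFdef
  have hsrc : ∀ j, s (F j) = t (g (ι j)) := by
    intro j; simp only [hFdef]; exact ((hR (ι j) (hEven_ι j)).2).symm
  have hchain : ∀ j, t (F j) = s (F (j + 1)) := by
    intro j
    simp only [hFdef]
    have e1 : t (g (ι j + 1)) = t (g (ι j + 1 + 1)) := hT (ι j + 1) (hOdd_ι1 j)
    have e2 : ι j + 1 + 1 = ι (j + 1) := by rw [hstep]; ring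
    have e3 : t (g (ι (j + 1))) = s (g (ι (j + 1) + 1)) := (hR (ι (j + 1)) (hEven_ι (j + 1))).2
    rw [e1, e2, e3]
  have hFinj : Function.Injective F := by
    intro j j' hh
    simp only [hFdef] at hh
    exact hι_inj (add_right_cancel (ginj hh))
  have hsinj : Function.Injective (fun j => s (F j)) := by
    intro j j' hss
    by_contra hne
    have hss' : s (F j) = s (F j') := hss
    rw [hsrc j, hsrc j'] at hss'
    have hιne : ι j ≠ ι j' := fun hh => hne (hι_inj hh)
    have hTA : TAdj s t (g (ι j)) (g (ι j')) := ⟨fun hh => hιne (ginj hh), Or.inl hss'⟩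
    rcases (hadj _ _ hιne).mp hTA with hc | hc
    · have hv := congrArg ZMod.val hc
      rw [hι_val, hι1_val] at hv
      omega
    · have hv := congrArg ZMod.val hc
      rw [hι_val, hι1_val] at hv
      omega
  rcases (by omega : 3 ≤ m ∨ m = 2) with hm3 | hm2
  · exact h m (Finset.univ.image F) hm3
      ⟨by omega, F, hFinj, fun e => by simp, hsinj, hchain⟩
  · have h01 : (0 : ZMod m) + 1 = 1 := by rw [zero_add]
    have h11 : (1 : ZMod m) + 1 = 0 := by subst hm2; decide
    have hST : s (F 0) = t (F 1) := by
      have := hchain 1; rw [h11] at this; exact this.symm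
    have hTS : t (F 0) = s (F 1) := by
      have := hchain 0; rw [h01] at this; exact this
    have hFne : F 0 ≠ F 1 := by
      intro hh
      have h01' : (0 : ZMod m) = 1 := hFinj hh
      subst hm2; revert h01'; decide
    have hne01 : ι 0 + 1 ≠ ι 1 + 1 := by
      intro hh
      have h01' : (0 : ZMod m) = 1 := hι_inj (add_right_cancel hh)
      subst hm2; revert h01'; decide
    have hTA : TAdj s t (F 0) (F 1) := ⟨hFne, Or.inr (Or.inr ⟨hST, hTS⟩)⟩
    have hTA' : TAdj s t (g (ι 0 + 1)) (g (ι 1 + 1)) := by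
      simpa only [hFdef] using hTA
    rcases (hadj _ _ hne01).mp hTA' with hc | hc
    · have e2 : ι 0 + 1 + 1 = ι (0 + 1) := by rw [hstep]; ring
      rw [e2, h01] at hc
      exact h1ne0 (by linear_combination hc)
    · have e2 : ι 1 + 1 + 1 = ι (1 + 1) := by rw [hstep]; ring
      rw [e2, h11] at hc
      exact h1ne0 (by linear_combination hc)

/-- Parity step: in an induced cycle of the tree conflict graph, the two kinds of
adjacency strictly alternate; given that position `0` is a reversed pair, the cycle
has even length and `st13_main` applies. -/
private lemma st13_aux {V E : Type} (s t : E → V) (h : TwoAcyclic s t)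
    (n : ℕ) (hn : 4 ≤ n) (g : ZMod n → E) (ginj : Function.Injective g)
    (hadj : ∀ i j : ZMod n, i ≠ j → (TAdj s t (g i) (g j) ↔ j = i + 1 ∨ i = j + 1))
    (hT0 : ¬ t (g 0) = t (g 1)) : False := by
  haveI : NeZero n := ⟨by omega⟩
  have h1ne0 : (1 : ZMod n) ≠ 0 := by
    have := st13_natCast_ne_zero (n := n) (k := 1) (by omega) (by omega)
    push_cast at this; exact this
  have h2ne0 : (2 : ZMod n) ≠ 0 := by
    have := st13_natCast_ne_zero (n := n) (k := 2) (by omega) (by omega)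
    push_cast at this; exact this
  have h3ne0 : (3 : ZMod n) ≠ 0 := by
    have := st13_natCast_ne_zero (n := n) (k := 3) (by omega) (by omega)
    push_cast at this; exact this
  have hTR : ∀ i : ZMod n, t (g i) = t (g (i + 1)) ∨
      (s (g i) = t (g (i + 1)) ∧ t (g i) = s (g (i + 1))) := by
    intro i
    have hne : i ≠ i + 1 := fun hh => h1ne0 (by linear_combination -hh)
    have hTA := (hadj i (i + 1) hne).mpr (Or.inl rfl)
    simp only [TAdj, SameEnds] at hTA
    rcases hTA.2 with h' | ⟨_, h'⟩ | h'
    · exact Or.inl h'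
    · exact Or.inl h'
    · exact Or.inr h'
  have hne2 : ∀ i : ZMod n, i ≠ i + 2 := fun i hh => h2ne0 (by linear_combination -hh)
  have hnon : ∀ i : ZMod n, ¬ TAdj s t (g i) (g (i + 2)) := by
    intro i hTA
    rcases (hadj i (i + 2) (hne2 i)).mp hTA with hc | hc
    · exact h1ne0 (by linear_combination hc)
    · exact h3ne0 (by linear_combination -hc)
  have hTT : ∀ i : ZMod n, t (g i) = t (g (i + 1)) → t (g (i + 1)) = t (g (i + 1 + 1)) →
      False := by
    intro i h1 h2
    have e : i + 1 + 1 = i + 2 := by ring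
    rw [e] at h2
    exact hnon i ⟨fun hh => hne2 i (ginj hh), Or.inl (h1.trans h2)⟩
  have hRR : ∀ i : ZMod n,
      (s (g i) = t (g (i + 1)) ∧ t (g i) = s (g (i + 1))) →
      (s (g (i + 1)) = t (g (i + 1 + 1)) ∧ t (g (i + 1)) = s (g (i + 1 + 1))) → False := by
    intro i h1 h2
    have e : i + 1 + 1 = i + 2 := by ring
    rw [e] at h2
    exact hnon i ⟨fun hh => hne2 i (ginj hh), Or.inl (h1.2.trans h2.1)⟩
  have halt : ∀ i : ZMod n, t (g i) = t (g (i + 1)) ↔ ¬ t (g (i + 1)) = t (g (i + 1 + 1)) := by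
    intro i
    constructor
    · exact hTT i
    · intro hnt1
      by_contra hnt
      rcases hTR i with h' | h'
      · exact hnt h'
      · rcases hTR (i + 1) with h'' | h''
        · exact hnt1 h''
        · exact hRR i h' h''
  have hpar : ∀ (k : ℕ) (i : ZMod n),
      t (g (i + (k : ℕ))) = t (g (i + (k : ℕ) + 1)) ↔
        (t (g i) = t (g (i + 1)) ↔ Even k) := by
    intro k
    induction k with
    | zero => intro i; simp
    | succ k ih =>
      intro i
      have e : ((k + 1 : ℕ) : ZMod n) = ((k : ℕ) : ZMod n) + 1 := by push_cast; ring
      rw [e, ← add_assoc]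
      have h1 := halt (i + (k : ℕ))
      have h2 := ih i
      have h3 := Nat.even_add_one (n := k)
      tauto
  have heven : Even n := by
    have hp := hpar n 0
    rw [ZMod.natCast_self, add_zero] at hp
    simp only [zero_add] at hp
    tauto
  obtain ⟨m, hm⟩ := heven
  have hm2 : 2 ≤ m := by omega
  have key : ∀ i : ZMod n, t (g i) = t (g (i + 1)) ↔ (t (g 0) = t (g 1) ↔ Even i.val) := by
    intro i
    have hp := hpar i.val 0
    rw [ZMod.natCast_rightInverse i] at hp
    simpa only [zero_add] using hp
  have hRe : ∀ i : ZMod n, Even i.val →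
      s (g i) = t (g (i + 1)) ∧ t (g i) = s (g (i + 1)) := by
    intro i hev
    have hp := key i
    have hnt : ¬ t (g i) = t (g (i + 1)) := by tauto
    rcases hTR i with h' | h'
    · exact absurd h' hnt
    · exact h'
  have hTo : ∀ i : ZMod n, Odd i.val → t (g i) = t (g (i + 1)) := by
    intro i hodd
    have hp := key i
    have hnev : ¬ Even i.val := by
      rcases hodd with ⟨k, hk⟩
      rintro ⟨r, hr⟩
      omega
    tauto
  exact st13_main s t h n m hm2 (by omega) g ginj hadj hRe hTo

/-- If `D` is 2-acyclic, then the tree conflict graph `G^t_D` is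
chordal: it has no induced cycle of length at least 4. -/
theorem statement_13 {V E : Type} (s t : E → V) (h : TwoAcyclic s t) :
    ¬ HasInducedCycleGE4 (TAdj s t) := by
  intro hcy
  obtain ⟨n, hn, g, ginj, hadj⟩ := hcy
  haveI : NeZero n := ⟨by omega⟩
  have h1ne0 : (1 : ZMod n) ≠ 0 := by
    have := st13_natCast_ne_zero (n := n) (k := 1) (by omega) (by omega)
    push_cast at this; exact this
  have h2ne0 : (2 : ZMod n) ≠ 0 := by
    have := st13_natCast_ne_zero (n := n) (k := 2) (by omega) (by omega)
    push_cast at this; exact this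
  have h3ne0 : (3 : ZMod n) ≠ 0 := by
    have := st13_natCast_ne_zero (n := n) (k := 3) (by omega) (by omega)
    push_cast at this; exact this
  by_cases h0 : t (g 0) = t (g 1)
  · have ginj' : Function.Injective (fun i : ZMod n => g (i + 1)) := by
      intro a b hab
      exact add_right_cancel (ginj hab)
    have hadj' : ∀ i j : ZMod n, i ≠ j →
        (TAdj s t (g (i + 1)) (g (j + 1)) ↔ j = i + 1 ∨ i = j + 1) := by
      intro i j hij
      have hne : i + 1 ≠ j + 1 := fun hh => hij (add_right_cancel hh)
      rw [hadj (i + 1) (j + 1) hne]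
      constructor
      · rintro (hc | hc)
        · exact Or.inl (add_right_cancel hc)
        · exact Or.inr (add_right_cancel hc)
      · rintro (hc | hc)
        · exact Or.inl (by rw [hc])
        · exact Or.inr (by rw [hc])
    have hT1 : ¬ t (g (0 + 1)) = t (g (1 + 1)) := by
      rw [zero_add]
      intro hc
      have htr : t (g 0) = t (g (1 + 1)) := h0.trans hc
      have hne : (0 : ZMod n) ≠ 1 + 1 := fun hh => h2ne0 (by linear_combination -hh)
      have hTA : TAdj s t (g 0) (g (1 + 1)) := ⟨fun hh => hne (ginj hh), Or.inl htr⟩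
      rcases (hadj 0 (1 + 1) hne).mp hTA with hc' | hc'
      · exact h1ne0 (by linear_combination hc')
      · exact h3ne0 (by linear_combination -hc')
    exact st13_aux s t h n hn (fun i => g (i + 1)) ginj' hadj' hT1
  · exact st13_aux s t h n hn g ginj hadj h0

end ArXiv
end
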